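/- arXiv:2511.12564 — 7 statements merged into one kernel-verified Lean document; each statement's English description precedes it below -/
import Mathlib

section
/- Let n ≥ 2 be an integer, r ≥ 0, and let f : [0,∞) → [0,∞) be any r-log-Lipschitz function with ∑_{x'=1}^n f(x') > 0. Then for every x ∈ {1,…,n}, f(x) / (∑_{x'=1}^n f(x')) ≤ 2^{r+2} / n. -/
theorem single_log_lipschitz_sensitivity_bound (n : ℕ) (hn : 2 ≤ n) (r : ℝ) (hr : 0 ≤ r)
    (f : ℝ → ℝ)
    (hmono : ∀ x y, 0 ≤ x → x ≤ y → f x ≤ f y)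
    (hnonneg : ∀ x, 0 ≤ x → 0 ≤ f x)
    (hlip : ∀ c x, 1 ≤ c → 0 ≤ x → f (c * x) ≤ c ^ r * f x)
    (hpos : 0 < ∑ x' ∈ Finset.Icc 1 n, f x')
    (x : ℕ) (hx : x ∈ Finset.Icc 1 n) :
    f x / (∑ x' ∈ Finset.Icc 1 n, f x') ≤ 2 ^ (r + 2) / n := by
  set S := ∑ x' ∈ Finset.Icc 1 n, f x' with hS
  simp only [Finset.mem_Icc] at hx
  obtain ⟨hx1, hxn⟩ := hx
  have hnpos : (0:ℝ) < n := by positivity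
  have h2r : (0:ℝ) < 2 ^ r := Real.rpow_pos_of_pos two_pos r
  have hfn : 0 < f n := by
    by_contra h
    push_neg at h
    have hfn0 : f n = 0 := le_antisymm h (hnonneg n (by positivity))
    have hz : S = 0 := by
      apply Finset.sum_eq_zero
      intro i hi
      simp only [Finset.mem_Icc] at hi
      have h1 : f i ≤ f n := hmono i n (by positivity) (by exact_mod_cast hi.2)
      have h2 : 0 ≤ f i := hnonneg i (by positivity)
      linarith
    linarith
  set m := (n+1)/2 with hm
  have hm1 : 1 ≤ m := by omega
  have hmn : m ≤ n := by omega
  have h2m : n ≤ 2 * m := by omega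
  have hkey : ∀ i ∈ Finset.Icc m n, f n / 2 ^ r ≤ f i := by
    intro i hi
    simp only [Finset.mem_Icc] at hi
    have hi1 : 1 ≤ i := le_trans hm1 hi.1
    have hipos : (0:ℝ) < i := by exact_mod_cast hi1
    have hc1 : (1:ℝ) ≤ (n:ℝ)/i := by
      rw [le_div_iff₀ hipos]
      have : (i:ℝ) ≤ n := by exact_mod_cast hi.2
      linarith
    have hn2i : n ≤ 2 * i := by omega
    have hc2 : (n:ℝ)/i ≤ 2 := by
      rw [div_le_iff₀ hipos]
      exact_mod_cast hn2i
    have heq : (n:ℝ)/i * i = n := div_mul_cancel₀ _ (ne_of_gt hipos)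
    have h1 : f n ≤ ((n:ℝ)/i) ^ r * f i := by
      have := hlip ((n:ℝ)/i) i hc1 (le_of_lt hipos)
      rwa [heq] at this
    have h2 : ((n:ℝ)/i) ^ r ≤ 2 ^ r :=
      Real.rpow_le_rpow (by linarith) hc2 hr
    have h3 : 0 ≤ f i := hnonneg i (le_of_lt hipos)
    rw [div_le_iff₀ h2r]
    nlinarith
  have hcard : (Finset.Icc m n).card = n + 1 - m := Nat.card_Icc m n
  have hsum : (n:ℝ)/2 * (f n / 2 ^ r) ≤ S := by
    have h1 : (Finset.Icc m n).card • (f n / 2 ^ r) ≤ ∑ i ∈ Finset.Icc m n, f i :=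
      Finset.card_nsmul_le_sum _ _ _ hkey
    have h2 : ∑ i ∈ Finset.Icc m n, f i ≤ S := by
      apply Finset.sum_le_sum_of_subset_of_nonneg
      · apply Finset.Icc_subset_Icc_left hm1
      · intro i hi _
        simp only [Finset.mem_Icc] at hi
        exact hnonneg i (by positivity)
    have h3 : (n:ℝ)/2 ≤ ((n + 1 - m : ℕ) : ℝ) := by
      rw [div_le_iff₀ (by norm_num : (0:ℝ) < 2)]
      have h : n ≤ (n + 1 - m) * 2 := by omega
      exact_mod_cast h
    have h4 : 0 < f n / 2 ^ r := by positivity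
    calc (n:ℝ)/2 * (f n / 2 ^ r) ≤ ((n + 1 - m : ℕ) : ℝ) * (f n / 2 ^ r) := by nlinarith
    _ = (Finset.Icc m n).card • (f n / 2 ^ r) := by rw [hcard, nsmul_eq_mul]
    _ ≤ _ := le_trans h1 h2
  have hfx : f x ≤ f n := hmono x n (by positivity) (by exact_mod_cast hxn)
  have hrw : (2:ℝ) ^ (r + 2) = 2 ^ r * 4 := by
    rw [Real.rpow_add two_pos]
    norm_num [Real.rpow_two]
  rw [div_le_div_iff₀ hpos hnpos, hrw]
  have hS2 : 2 ^ r * S ≥ (n:ℝ)/2 * f n := by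
    have := mul_le_mul_of_nonneg_left hsum (le_of_lt h2r)
    calc (n:ℝ)/2 * f n = 2 ^ r * ((n:ℝ)/2 * (f n / 2 ^ r)) := by
          field_simp
    _ ≤ 2 ^ r * S := this
  nlinarith [hnonneg x (by positivity : (0:ℝ) ≤ x)]
end

section
/- Let n, k ≥ 1 be integers with n ≥ 10k and r ≥ 0. Let f̃ : ℝ → [0,∞) be a symmetric-r function, i.e., there exist a ∈ ℝ and an r-log-Lipschitz function f such that f̃(x) = f(|x − a|) for all x. Then for every subset X ⊆ {1,…,n} of size at least n/k with ∑_{x'∈X} f̃(x') > 0, and every x̃ ∈ {1,…,n}, we have f̃(x̃) / (∑_{x'∈X} f̃(x')) ≤ (10k)^{r+1} / n. -/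
/-!
Put `c = 10k` and `t = |x̃ - a| / c`. By log-Lipschitzness, `f̃(x̃) = f(c t) ≤ c^r f(t)`. Every point
of `X` at distance at least `t` from `a` contributes at least `f(t)` to the sum. The points closer to `a`
are integers in an interval of length `2t`, and if there is one, the triangle inequality through it
gives `(c - 1) t ≤ n - 1`, so `t ≤ n / 9k`; hence at most `2n / 9k + 1` of the `≥ n/k` points of `X`
are close to `a`, leaving at least `n / c` far ones. Thus `n f(t) / c ≤ ∑ f̃` and the bound follows.
-/

open Finset

theorem card_le_two_mul_add_one_of_forall_abs_sub_le {S : Finset ℕ} {a t : ℝ} (ht : 0 ≤ t)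
    (h : ∀ x ∈ S, |(x : ℝ) - a| ≤ t) : (#S : ℝ) ≤ 2 * t + 1 := by
  have hmaps : ∀ x ∈ S, (x : ℤ) ∈ Icc ⌈a - t⌉ ⌊a + t⌋ := by
    intro x hx
    obtain ⟨hlo, hhi⟩ := abs_le.mp (h x hx)
    rw [mem_Icc, Int.ceil_le, Int.le_floor]
    push_cast
    constructor <;> linarith
  have hcard : #S ≤ (⌊a + t⌋ + 1 - ⌈a - t⌉).toNat := by
    rw [← Int.card_Icc]
    exact card_le_card_of_injOn _ hmaps Nat.cast_injective.injOn
  have hcast : ((⌊a + t⌋ + 1 - ⌈a - t⌉).toNat : ℝ) = max ((⌊a + t⌋ : ℝ) + 1 - ⌈a - t⌉) 0 := by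
    exact_mod_cast congrArg (fun m : ℤ => (m : ℝ)) (Int.toNat_eq_max _)
  calc (#S : ℝ) ≤ ((⌊a + t⌋ + 1 - ⌈a - t⌉).toNat : ℝ) := by exact_mod_cast hcard
    _ ≤ 2 * t + 1 := by
      rw [hcast]
      refine max_le ?_ (by linarith)
      linarith [Int.floor_le (a + t), Int.le_ceil (a - t)]

theorem card_filter_mul_le_sum_comp {ι : Type*} {g : ι → ℝ} {φ : ℝ → ℝ} (s : Finset ι)
    (hφ : MonotoneOn φ (Set.Ici 0)) (hφ_nonneg : ∀ x, 0 ≤ x → 0 ≤ φ x) (hg : ∀ i, 0 ≤ g i)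
    {t : ℝ} (ht : 0 ≤ t) : #{i ∈ s | t ≤ g i} * φ t ≤ ∑ i ∈ s, φ (g i) := by
  calc #{i ∈ s | t ≤ g i} * φ t ≤ ∑ i ∈ s with t ≤ g i, φ (g i) := by
        rw [← nsmul_eq_mul]
        refine card_nsmul_le_sum _ _ _ fun i hi => ?_
        exact hφ ht (le_trans ht (mem_filter.mp hi).2) (mem_filter.mp hi).2
    _ ≤ ∑ i ∈ s, φ (g i) :=
        sum_le_sum_of_subset_of_nonneg (filter_subset _ _) fun i _ _ => hφ_nonneg _ (hg i)

theorem div_ten_mul_le_card_filter_le_abs_sub {n k : ℕ} (hk : 1 ≤ k) (hn : 10 * k ≤ n)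
    {X : Finset ℕ} (hX : X ⊆ Icc 1 n) (hXcard : (n : ℝ) / k ≤ #X) {xt : ℕ} (hxt : xt ∈ Icc 1 n)
    (a : ℝ) : (n : ℝ) / (10 * k) ≤ #{x ∈ X | |(xt : ℝ) - a| / (10 * k) ≤ |((x : ℕ) : ℝ) - a|} := by
  have hk' : (1 : ℝ) ≤ k := by exact_mod_cast hk
  set t := |(xt : ℝ) - a| / (10 * k) with ht_def
  have ht : 0 ≤ t := by positivity
  have hsplit := card_filter_add_card_filter_not (s := X) (fun x : ℕ => |(x : ℝ) - a| < t)
  simp only [not_lt] at hsplit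
  set B := X.filter (fun x : ℕ => |(x : ℝ) - a| < t)
  have ht_le : B.Nonempty → t ≤ n / (9 * k) := by
    rintro ⟨b, hb⟩
    obtain ⟨hbX, hbt⟩ := mem_filter.mp hb
    have hdist : |(xt : ℝ) - b| ≤ n - 1 := by
      obtain ⟨hb1, hbn⟩ := mem_Icc.mp (hX hbX)
      obtain ⟨hxt1, hxtn⟩ := mem_Icc.mp hxt
      exact abs_sub_le_of_le_of_le (by exact_mod_cast hxt1) (by exact_mod_cast hxtn)
        (by exact_mod_cast hb1) (by exact_mod_cast hbn)
    have hct : 10 * k * t < n - 1 + t := by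
      calc 10 * k * t = |(xt : ℝ) - a| := by rw [ht_def]; field_simp
        _ ≤ |(xt : ℝ) - b| + |(b : ℝ) - a| := abs_sub_le _ _ _
        _ < n - 1 + t := by linarith
    rw [le_div_iff₀ (by positivity)]
    nlinarith
  have hB : (#B : ℝ) ≤ 2 * (n / (9 * k)) + 1 := by
    rcases B.eq_empty_or_nonempty with hempty | hne
    · rw [hempty, card_empty, Nat.cast_zero]
      positivity
    · exact card_le_two_mul_add_one_of_forall_abs_sub_le (by positivity)
        fun x hx => (mem_filter.mp hx).2.le.trans (ht_le hne)
  have hnk : (10 : ℝ) ≤ n / k := by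
    rw [le_div_iff₀ (by positivity)]
    exact_mod_cast hn
  have hsplit' : (#X : ℝ) = #B + #{x ∈ X | t ≤ |((x : ℕ) : ℝ) - a|} := by
    exact_mod_cast hsplit.symm
  have h9 : (n : ℝ) / (9 * k) = n / k / 9 := by rw [div_div, mul_comm]
  have h10 : (n : ℝ) / (10 * k) = n / k / 10 := by rw [div_div, mul_comm]
  rw [h9] at hB
  rw [h10]
  linarith

theorem symmetric_r_sensitivity_on_subset_general (n k : ℕ) (hk : 1 ≤ k) (hn : 10 * k ≤ n)
    (r : ℝ) (ftil : ℝ → ℝ)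
    (hsym : ∃ (a : ℝ) (f : ℝ → ℝ),
      (∀ x y, 0 ≤ x → x ≤ y → f x ≤ f y) ∧
      (∀ x, 0 ≤ x → 0 ≤ f x) ∧
      (∀ c x, 1 ≤ c → 0 ≤ x → f (c * x) ≤ c ^ r * f x) ∧
      (∀ x : ℝ, ftil x = f |x - a|))
    (X : Finset ℕ) (hX : X ⊆ Finset.Icc 1 n) (hXcard : (n : ℝ) / k ≤ X.card)
    (hpos : 0 < ∑ x' ∈ X, ftil x')
    (xt : ℕ) (hxt : xt ∈ Finset.Icc 1 n) :
    ftil xt / (∑ x' ∈ X, ftil x') ≤ (10 * k : ℝ) ^ (r + 1) / n := by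
  obtain ⟨a, f, hmono, hnn, hlip, hftil⟩ := hsym
  have hk' : (1 : ℝ) ≤ k := by exact_mod_cast hk
  have hnpos : (0 : ℝ) < n := by
    have : (10 : ℝ) * k ≤ n := by exact_mod_cast hn
    linarith
  set c : ℝ := 10 * k
  have hc : 1 ≤ c := by linarith
  set t := |(xt : ℝ) - a| / c
  have ht : 0 ≤ t := by positivity
  have hxt_le : ftil xt ≤ c ^ r * f t := by
    calc ftil xt = f (c * t) := by rw [hftil, mul_div_cancel₀ _ (by positivity)]
      _ ≤ c ^ r * f t := hlip c t hc ht
  have hsum : n / c * f t ≤ ∑ x' ∈ X, ftil x' := by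
    calc n / c * f t ≤ #{x ∈ X | t ≤ |((x : ℕ) : ℝ) - a|} * f t :=
          mul_le_mul_of_nonneg_right
            (div_ten_mul_le_card_filter_le_abs_sub hk hn hX hXcard hxt a) (hnn t ht)
      _ ≤ ∑ x ∈ X, f |(x : ℝ) - a| :=
          card_filter_mul_le_sum_comp X (fun x hx y _ hxy => hmono x y hx hxy) hnn
            (fun _ => abs_nonneg _) ht
      _ = ∑ x' ∈ X, ftil x' := by simp only [hftil]
  rw [div_le_div_iff₀ hpos hnpos, Real.rpow_add_one (by positivity)]
  calc ftil xt * n ≤ c ^ r * f t * n := by gcongr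
    _ = c ^ r * c * (n / c * f t) := by field_simp
    _ ≤ c ^ r * c * ∑ x' ∈ X, ftil x' := by gcongr

theorem symmetric_r_sensitivity_on_subset (n k : ℕ) (hk : 1 ≤ k) (hn : 10 * k ≤ n)
    (r : ℝ) (hr : 0 ≤ r) (ftil : ℝ → ℝ)
    (hsym : ∃ (a : ℝ) (f : ℝ → ℝ),
      (∀ x y, 0 ≤ x → x ≤ y → f x ≤ f y) ∧
      (∀ x, 0 ≤ x → 0 ≤ f x) ∧
      (∀ c x, 1 ≤ c → 0 ≤ x → f (c * x) ≤ c ^ r * f x) ∧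
      (∀ x : ℝ, ftil x = f |x - a|))
    (X : Finset ℕ) (hX : X ⊆ Finset.Icc 1 n) (hXcard : (n : ℝ) / k ≤ X.card)
    (hpos : 0 < ∑ x' ∈ X, ftil x')
    (xt : ℕ) (hxt : xt ∈ Finset.Icc 1 n) :
    ftil xt / (∑ x' ∈ X, ftil x') ≤ (10 * k : ℝ) ^ (r + 1) / n :=
  symmetric_r_sensitivity_on_subset_general n k hk hn r ftil hsym X hX hXcard hpos xt hxt
end

section
/- Let n, k ≥ 1 be integers with n ≥ 10k, let r ≥ 0, and let F be a set of k symmetric-r functions taking strictly positive values on {1,…,n}. Define f(x) := min_{f'∈F} f'(x) for every x ∈ {1,…,n}. Then for every x ∈ {1,…,n}, f(x) / (∑_{x'=1}^n f(x')) ≤ (10k)^{r+1} / n. -/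
/-!
Put `K = 10k` and call `y` bad when `K ^ r * f y < f x`. For a bad `y`, the member `g (|· - a|)`
of `F` attaining the minimum at `y` satisfies `K ^ r * g |y - a| < g |x - a|`, which by the
log-Lipschitz bound forces `K |y - a| < |x - a| ≤ |x - y| + |y - a|`, i.e. `(K - 1) |y - a| < n`.
So each member of `F` accounts for at most `2n / (K - 1) + 1` bad points, and all together for
at most `n - n / K`. Each of the remaining `n / K` points contributes at least `f x / K ^ r` to
the sum.
-/

open Finset

structure IsLogLipschitz (r : ℝ) (g : ℝ → ℝ) : Prop where
  monotoneOn : MonotoneOn g (Set.Ici 0)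
  nonneg : ∀ x, 0 ≤ x → 0 ≤ g x
  map_mul_le : ∀ c x, 1 ≤ c → 0 ≤ x → g (c * x) ≤ c ^ r * g x

def IsSymmetricLogLipschitz (r : ℝ) (h : ℝ → ℝ) : Prop :=
  ∃ (a : ℝ) (g : ℝ → ℝ), IsLogLipschitz r g ∧ ∀ x, h x = g |x - a|

namespace IsLogLipschitz

variable {r : ℝ} {g : ℝ → ℝ}

theorem le_rpow_mul_of_le_mul (hg : IsLogLipschitz r g) (hr : 0 ≤ r) {K d e : ℝ} (hK : 1 ≤ K)
    (hd : 0 ≤ d) (he : 0 ≤ e) (hde : d ≤ K * e) : g d ≤ K ^ r * g e := by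
  have hge : 0 ≤ g e := hg.nonneg e he
  rcases le_or_gt d e with hle | hlt
  · calc g d ≤ g e := hg.monotoneOn hd he hle
      _ ≤ K ^ r * g e := le_mul_of_one_le_left hge (Real.one_le_rpow hK hr)
  · have he0 : 0 < e := he.lt_of_ne' fun h0 => by rw [h0, mul_zero] at hde; linarith
    have hc : 1 ≤ d / e := (one_le_div he0).2 hlt.le
    calc g d = g (d / e * e) := by rw [div_mul_cancel₀ d he0.ne']
      _ ≤ (d / e) ^ r * g e := hg.map_mul_le _ _ hc he
      _ ≤ K ^ r * g e := by
        gcongr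
        exact (div_le_iff₀ he0).2 hde

theorem mul_abs_sub_lt_of_rpow_mul_lt (hg : IsLogLipschitz r g) (hr : 0 ≤ r) {K a x y : ℝ}
    (hK : 1 ≤ K) (h : K ^ r * g |y - a| < g |x - a|) : K * |y - a| < |x - a| := by
  by_contra! hle
  exact (hg.le_rpow_mul_of_le_mul hr hK (abs_nonneg _) (abs_nonneg _) hle).not_gt h

end IsLogLipschitz

theorem IsSymmetricLogLipschitz.nonneg {r : ℝ} {h : ℝ → ℝ}
    (hh : IsSymmetricLogLipschitz r h) (x : ℝ) : 0 ≤ h x := by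
  obtain ⟨a, g, hg, hh⟩ := hh
  exact (hh x).symm ▸ hg.nonneg _ (abs_nonneg _)

theorem Finset.card_le_of_forall_abs_sub_le (s : Finset ℕ) {c ρ : ℝ} (hρ : 0 ≤ ρ)
    (h : ∀ y ∈ s, |(y : ℝ) - c| ≤ ρ) : (#s : ℝ) ≤ 2 * ρ + 1 := by
  rcases s.eq_empty_or_nonempty with rfl | hs
  · simp only [card_empty, Nat.cast_zero]; linarith
  set m := s.min' hs
  have hsub : s ⊆ Icc m (m + ⌊2 * ρ⌋₊) := by
    intro y hy
    have hmy : m ≤ y := s.min'_le y hy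
    have hdiff : ((y - m : ℕ) : ℝ) ≤ 2 * ρ := by
      have hyc := abs_le.1 (h y hy)
      have hmc := abs_le.1 (h m (s.min'_mem hs))
      rw [Nat.cast_sub hmy]; linarith [hyc.2, hmc.1]
    have hfloor := Nat.le_floor hdiff
    exact mem_Icc.2 ⟨hmy, by omega⟩
  calc (#s : ℝ) ≤ ⌊2 * ρ⌋₊ + 1 := by
        have hcard := card_le_card hsub
        rw [Nat.card_Icc] at hcard
        exact_mod_cast (by omega : #s ≤ ⌊2 * ρ⌋₊ + 1)
    _ ≤ 2 * ρ + 1 := by linarith [Nat.floor_le (by positivity : 0 ≤ 2 * ρ)]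

theorem IsSymmetricLogLipschitz.card_filter_rpow_mul_lt_le {r : ℝ} {h : ℝ → ℝ}
    (hh : IsSymmetricLogLipschitz r h) (hr : 0 ≤ r) {K : ℝ} (hK : 1 < K) {n x : ℕ}
    (hx : x ∈ Icc 1 n) :
    (#{y ∈ Icc 1 n | K ^ r * h (y : ℕ) < h x} : ℝ) ≤ 2 * n / (K - 1) + 1 := by
  obtain ⟨a, g, hg, hh⟩ := hh
  obtain rfl : h = fun x => g |x - a| := funext hh
  have hρ : (0 : ℝ) ≤ n / (K - 1) := div_nonneg n.cast_nonneg (by linarith)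
  rw [mul_div_assoc]
  refine card_le_of_forall_abs_sub_le _ (c := a) hρ fun y hy => ?_
  obtain ⟨hyI, hlt⟩ := mem_filter.1 hy
  have hK' := hg.mul_abs_sub_lt_of_rpow_mul_lt hr hK.le hlt
  have hxn : (x : ℝ) ≤ n := by exact_mod_cast (mem_Icc.1 hx).2
  have hyn : (y : ℝ) ≤ n := by exact_mod_cast (mem_Icc.1 hyI).2
  have hxy : |(x : ℝ) - y| ≤ n :=
    abs_sub_le_iff.2
      ⟨by linarith [y.cast_nonneg (α := ℝ)], by linarith [x.cast_nonneg (α := ℝ)]⟩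
  rw [le_div_iff₀ (by linarith)]
  nlinarith [abs_sub_le (x : ℝ) y a]

theorem Finset.card_filter_mul_inf'_lt_le_sum {ι α : Type*} (s : Finset α) (F : Finset ι)
    (hF : F.Nonempty) (φ : ι → α → ℝ) (c : ℝ) (x : α) :
    #{y ∈ s | c * F.inf' hF (φ · y) < F.inf' hF (φ · x)} ≤
      ∑ i ∈ F, #{y ∈ s | c * φ i y < φ i x} := by
  classical
  refine (card_le_card fun y hy => ?_).trans card_biUnion_le
  obtain ⟨hys, hlt⟩ := mem_filter.1 hy
  obtain ⟨i, hi, hiy⟩ := F.exists_mem_eq_inf' hF (φ · y)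
  exact mem_biUnion.2 ⟨i, hi, mem_filter.2 ⟨hys, by
    rw [← hiy]; exact hlt.trans_le (F.inf'_le _ hi)⟩⟩

theorem Finset.card_filter_le_mul_mul_le_mul_sum {α : Type*} (s : Finset α) (f : α → ℝ)
    (hf : ∀ y ∈ s, 0 ≤ f y) {c : ℝ} (hc : 0 ≤ c) (θ : ℝ) :
    #{y ∈ s | θ ≤ c * f y} * θ ≤ c * ∑ y ∈ s, f y := by
  rw [mul_sum]
  calc #{y ∈ s | θ ≤ c * f y} * θ ≤ ∑ y ∈ s with θ ≤ c * f y, c * f y := by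
        simpa using card_nsmul_le_sum _ _ θ fun y hy => (mem_filter.1 hy).2
    _ ≤ ∑ y ∈ s, c * f y := sum_le_sum_of_subset_of_nonneg (filter_subset _ _)
        fun y hy _ => mul_nonneg hc (hf y hy)

theorem card_filter_rpow_mul_inf'_lt_le {r : ℝ} (hr : 0 ≤ r) {K : ℝ} (hK : 1 < K)
    (F : Finset (ℝ → ℝ)) (hFne : F.Nonempty) (hF : ∀ h ∈ F, IsSymmetricLogLipschitz r h)
    {n x : ℕ} (hx : x ∈ Icc 1 n) :
    (#{y ∈ Icc 1 n | K ^ r * F.inf' hFne (· (y : ℕ)) < F.inf' hFne (· x)} : ℝ) ≤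
      #F * (2 * n / (K - 1) + 1) :=
  calc (#{y ∈ Icc 1 n | K ^ r * F.inf' hFne (· (y : ℕ)) < F.inf' hFne (· x)} : ℝ)
      ≤ ∑ h ∈ F, (#{y ∈ Icc 1 n | K ^ r * h (y : ℕ) < h x} : ℝ) := by
        exact_mod_cast card_filter_mul_inf'_lt_le_sum _ F hFne (fun h (y : ℕ) => h y) _ x
    _ ≤ ∑ _h ∈ F, (2 * n / (K - 1) + 1) :=
        sum_le_sum fun h hh => (hF h hh).card_filter_rpow_mul_lt_le hr hK hx
    _ = #F * (2 * n / (K - 1) + 1) := by rw [sum_const, nsmul_eq_mul]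

theorem div_sum_le_of_card_le_mul_card_filter {α : Type*} (s : Finset α) (f : α → ℝ)
    (hf : ∀ y ∈ s, 0 ≤ f y) {c K t : ℝ} (hc : 0 ≤ c) (hK : 0 ≤ K) (ht : 0 ≤ t)
    (h : #s ≤ K * #{y ∈ s | t ≤ c * f y}) : t / ∑ y ∈ s, f y ≤ c * K / #s := by
  rcases (sum_nonneg hf).eq_or_lt with hzero | hpos
  · rw [← hzero, div_zero]; positivity
  have hs : (0 : ℝ) < #s := Nat.cast_pos.2 (card_pos.2 (nonempty_of_sum_ne_zero hpos.ne'))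
  rw [div_le_div_iff₀ hpos hs]
  calc t * #s ≤ t * (K * #{y ∈ s | t ≤ c * f y}) := by gcongr
    _ = K * (#{y ∈ s | t ≤ c * f y} * t) := by ring
    _ ≤ K * (c * ∑ y ∈ s, f y) :=
        mul_le_mul_of_nonneg_left (card_filter_le_mul_mul_le_mul_sum s f hf hc t) hK
    _ = c * K * ∑ y ∈ s, f y := by ring

theorem le_mul_sub_mul_two_mul_div_add_one {k n : ℝ} (hk : 1 ≤ k) (hn : 10 * k ≤ n) :
    n ≤ 10 * k * (n - k * (2 * n / (10 * k - 1) + 1)) := by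
  have h9 : 9 ≤ 10 * k - 1 := by linarith
  have hfrac : k * (2 * n / (10 * k - 1)) ≤ 2 * n / 9 := by
    rw [← mul_div_assoc, div_le_div_iff₀ (by linarith) (by norm_num)]
    nlinarith
  nlinarith

theorem min_of_symmetric_r_sensitivity_general (n k : ℕ) (hk : 1 ≤ k) (hn : 10 * k ≤ n)
    (r : ℝ) (hr : 0 ≤ r) (F : Finset (ℝ → ℝ)) (hFcard : F.card = k)
    (hFne : F.Nonempty)
    (hsym : ∀ f' ∈ F, ∃ (a : ℝ) (g : ℝ → ℝ),
      (∀ x y, 0 ≤ x → x ≤ y → g x ≤ g y) ∧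
      (∀ x, 0 ≤ x → 0 ≤ g x) ∧
      (∀ c x, 1 ≤ c → 0 ≤ x → g (c * x) ≤ c ^ r * g x) ∧
      (∀ x : ℝ, f' x = g |x - a|))
    (f : ℕ → ℝ) (hf : ∀ x ∈ Finset.Icc 1 n, f x = F.inf' hFne (fun f' => f' x))
    (x : ℕ) (hx : x ∈ Finset.Icc 1 n) :
    f x / (∑ x' ∈ Finset.Icc 1 n, f x') ≤ (10 * k : ℝ) ^ (r + 1) / n := by
  have hsymF : ∀ f' ∈ F, IsSymmetricLogLipschitz r f' := fun f' hf' => by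
    obtain ⟨a, g, hmono, hnonneg, hmul, hfg⟩ := hsym f' hf'
    exact ⟨a, g, ⟨fun _ hs _ _ hst => hmono _ _ hs hst, hnonneg, hmul⟩, hfg⟩
  have hf_nonneg : ∀ y ∈ Icc 1 n, 0 ≤ f y := fun y hy =>
    (hf y hy).symm ▸ le_inf' _ _ fun f' hf' => (hsymF f' hf').nonneg _
  set K : ℝ := 10 * k
  have hkR : (1 : ℝ) ≤ k := by exact_mod_cast hk
  have hbad : (#{y ∈ Icc 1 n | K ^ r * f y < f x} : ℝ) ≤ k * (2 * n / (K - 1) + 1) := by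
    rw [filter_congr fun y hy => by rw [hf y hy, hf x hx], ← hFcard]
    exact card_filter_rpow_mul_inf'_lt_le hr (by linarith) F hFne hsymF hx
  have hsplit :
      (#{y ∈ Icc 1 n | K ^ r * f y < f x} : ℝ) + #{y ∈ Icc 1 n | f x ≤ K ^ r * f y} = n := by
    have := card_filter_add_card_filter_not (s := Icc 1 n) (fun y => K ^ r * f y < f x)
    simp only [not_lt, Nat.card_Icc, add_tsub_cancel_right] at this
    exact_mod_cast this
  have hgood : (n : ℝ) ≤ K * #{y ∈ Icc 1 n | f x ≤ K ^ r * f y} :=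
    (le_mul_sub_mul_two_mul_div_add_one hkR (by exact_mod_cast hn)).trans (by gcongr; linarith)
  have h := div_sum_le_of_card_le_mul_card_filter _ f hf_nonneg (by positivity : 0 ≤ K ^ r)
    (by positivity : 0 ≤ K) (hf_nonneg x hx) (by rwa [Nat.card_Icc, add_tsub_cancel_right])
  rwa [Nat.card_Icc, add_tsub_cancel_right, ← Real.rpow_add_one (by positivity)] at h

theorem min_of_symmetric_r_sensitivity (n k : ℕ) (hk : 1 ≤ k) (hn : 10 * k ≤ n)
    (r : ℝ) (hr : 0 ≤ r) (F : Finset (ℝ → ℝ)) (hFcard : F.card = k)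
    (hFne : F.Nonempty)
    (hsym : ∀ f' ∈ F, ∃ (a : ℝ) (g : ℝ → ℝ),
      (∀ x y, 0 ≤ x → x ≤ y → g x ≤ g y) ∧
      (∀ x, 0 ≤ x → 0 ≤ g x) ∧
      (∀ c x, 1 ≤ c → 0 ≤ x → g (c * x) ≤ c ^ r * g x) ∧
      (∀ x : ℝ, f' x = g |x - a|))
    (hposval : ∀ f' ∈ F, ∀ x ∈ Finset.Icc 1 n, 0 < f' (x : ℕ))
    (f : ℕ → ℝ) (hf : ∀ x ∈ Finset.Icc 1 n, f x = F.inf' hFne (fun f' => f' x))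
    (x : ℕ) (hx : x ∈ Finset.Icc 1 n) :
    f x / (∑ x' ∈ Finset.Icc 1 n, f x') ≤ (10 * k : ℝ) ^ (r + 1) / n :=
  min_of_symmetric_r_sensitivity_general n k hk hn r hr F hFcard hFne hsym f hf x hx
end

section
/- Let k ≥ 1 be an integer, and let f : [0,1] → [0,∞) be a k-piecewise monotonic function with t := ∫₀¹ f(x) dx > 0. Suppose s > 0 is such that f(x) ≤ t·s for all x ∈ [0,1]. Let ε ∈ (0,1), set ε' := 1/⌈2ks/ε⌉, and let S := {i·ε' : i ∈ {0,…,1/ε'}}. Then |(1/|S|)·∑_{x∈S} f(x) − t| ≤ ε·t. -/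
open Set MeasureTheory intervalIntegral
open scoped ENNReal

lemma evar_neg {α : Type*} [LinearOrder α] (f : α → ℝ) (s : Set α) :
    eVariationOn (fun x => -f x) s = eVariationOn f s := by
  simp only [eVariationOn, edist_neg_neg]

lemma AntitoneOn.eVariationOn_le' {f : ℝ → ℝ} {s : Set ℝ} (hf : AntitoneOn f s) {a b : ℝ}
    (as : a ∈ s) (bs : b ∈ s) : eVariationOn f (s ∩ Icc a b) ≤ ENNReal.ofReal (f a - f b) := by
  have hm : MonotoneOn (fun x => -f x) s := hf.neg
  have h := hm.eVariationOn_le as bs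
  rw [evar_neg] at h
  convert h using 2
  ring

theorem deterministic_grid_coreset (k : ℕ) (hk : 1 ≤ k) (f : ℝ → ℝ)
    (hnonneg : ∀ x ∈ Set.Icc (0:ℝ) 1, 0 ≤ f x)
    (hpm : ∃ (m : ℕ) (a : ℕ → ℝ), m ≤ k ∧ a 0 = 0 ∧ a m = 1 ∧
      (∀ i < m, a i ≤ a (i + 1)) ∧
      (∀ i < m, MonotoneOn f (Set.Icc (a i) (a (i + 1))) ∨
        AntitoneOn f (Set.Icc (a i) (a (i + 1)))))
    (hint : IntervalIntegrable f MeasureTheory.volume 0 1)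
    (t : ℝ) (ht : t = ∫ x in (0:ℝ)..1, f x) (htpos : 0 < t)
    (s : ℝ) (hs : 0 < s) (hbound : ∀ x ∈ Set.Icc (0:ℝ) 1, f x ≤ t * s)
    (ε : ℝ) (hε : ε ∈ Set.Ioo (0:ℝ) 1)
    (N : ℕ) (hN : N = ⌈2 * k * s / ε⌉₊) :
    |(∑ i ∈ Finset.range (N + 1), f ((i : ℝ) / N)) / (N + 1) - t| ≤ ε * t := by
  obtain ⟨m, a, hmk, ha0, ham, hmono_a, hpieces⟩ := hpm
  obtain ⟨hε0, hε1⟩ := hε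
  set M := t * s with hM
  have hM0 : 0 < M := mul_pos htpos hs
  have hk1 : (1:ℝ) ≤ (k:ℝ) := by exact_mod_cast hk
  -- monotonicity of breakpoints
  have haij : ∀ i j : ℕ, i ≤ j → j ≤ m → a i ≤ a j := by
    intro i j hij hjm
    induction j with
    | zero =>
      have hi0 : i = 0 := Nat.le_zero.mp hij
      simp [hi0]
    | succ n ih =>
      rcases Nat.lt_or_ge i (n + 1) with h | h
      · exact le_trans (ih (Nat.lt_succ_iff.mp h) (by omega)) (hmono_a n (by omega))
      · have : i = n + 1 := le_antisymm hij h
        simp [this]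
  have hrange : ∀ j ≤ m, a j ∈ Set.Icc (0:ℝ) 1 := by
    intro j hj
    constructor
    · rw [← ha0]; exact haij 0 j (Nat.zero_le _) hj
    · rw [← ham]; exact haij j m hj le_rfl
  -- variation of each piece
  have hpiece_var : ∀ j < m, eVariationOn f (Icc (a j) (a (j+1))) ≤ ENNReal.ofReal M := by
    intro j hj
    have h0 : a j ∈ Set.Icc (0:ℝ) 1 := hrange j (le_of_lt hj)
    have h1 : a (j+1) ∈ Set.Icc (0:ℝ) 1 := hrange (j+1) hj
    have hle : a j ≤ a (j+1) := hmono_a j hj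
    have hmemL : a j ∈ Icc (a j) (a (j+1)) := ⟨le_rfl, hle⟩
    have hmemR : a (j+1) ∈ Icc (a j) (a (j+1)) := ⟨hle, le_rfl⟩
    rcases hpieces j hj with hmo | han
    · have h := hmo.eVariationOn_le hmemL hmemR
      rw [Set.inter_self] at h
      refine h.trans (ENNReal.ofReal_le_ofReal ?_)
      have := hbound _ h1; have := hnonneg _ h0; linarith
    · have h := han.eVariationOn_le' hmemL hmemR
      rw [Set.inter_self] at h
      refine h.trans (ENNReal.ofReal_le_ofReal ?_)
      have := hbound _ h0; have := hnonneg _ h1; linarith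
  -- total variation bound
  have htotal : eVariationOn f (Icc (0:ℝ) 1) ≤ ENNReal.ofReal ((k:ℝ) * M) := by
    have key : ∀ n ≤ m, eVariationOn f (Icc (a 0) (a n)) ≤ (n : ℝ≥0∞) * ENNReal.ofReal M := by
      intro n hn
      induction n with
      | zero => simp
      | succ p ih =>
        have hpm' : p ≤ m := by omega
        have hpm'' : p < m := hn
        have step := eVariationOn.Icc_add_Icc f (s := Set.univ)
          (haij 0 p (Nat.zero_le _) hpm') (hmono_a p hpm'') (Set.mem_univ _)
        simp only [Set.univ_inter] at step
        calc eVariationOn f (Icc (a 0) (a (p+1)))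
            = eVariationOn f (Icc (a 0) (a p)) + eVariationOn f (Icc (a p) (a (p+1))) := step.symm
          _ ≤ (p : ℝ≥0∞) * ENNReal.ofReal M + ENNReal.ofReal M :=
              add_le_add (ih hpm') (hpiece_var p hpm'')
          _ = ((p+1 : ℕ) : ℝ≥0∞) * ENNReal.ofReal M := by
              push_cast; ring
    have h := key m le_rfl
    rw [ha0, ham] at h
    refine h.trans ?_
    calc (↑m : ℝ≥0∞) * ENNReal.ofReal M
        ≤ (↑k : ℝ≥0∞) * ENNReal.ofReal M := mul_le_mul_left (Nat.cast_le.mpr hmk) _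
      _ = ENNReal.ofReal ((k:ℝ) * M) := by
          rw [← ENNReal.ofReal_natCast k, ← ENNReal.ofReal_mul (Nat.cast_nonneg k)]
  have hfin : eVariationOn f (Icc (0:ℝ) 1) ≠ ⊤ :=
    ne_top_of_le_ne_top ENNReal.ofReal_ne_top htotal
  -- grid setup
  have hNx : (0:ℝ) < 2 * k * s / ε := by positivity
  have hN1 : 1 ≤ N := by rw [hN]; exact Nat.one_le_iff_ne_zero.mpr (by
    intro h; rw [Nat.ceil_eq_zero] at h; linarith)
  have hNr : 2 * k * s / ε ≤ (N : ℝ) := by rw [hN]; exact Nat.le_ceil _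
  have hNpos : (0:ℝ) < N := by exact_mod_cast Nat.lt_of_lt_of_le Nat.zero_lt_one hN1
  set c : ℕ → ℝ := fun i => (i : ℝ) / N with hc
  have hc0 : c 0 = 0 := by simp [hc]
  have hcN : c N = 1 := by simp [hc, hNpos.ne']
  have hcmono : ∀ i : ℕ, c i ≤ c (i+1) := by
    intro i
    apply (div_le_div_iff_of_pos_right hNpos).mpr
    exact_mod_cast Nat.le_succ i
  have hcmono' : ∀ i j : ℕ, i ≤ j → c i ≤ c j := by
    intro i j hij
    apply (div_le_div_iff_of_pos_right hNpos).mpr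
    exact_mod_cast hij
  have hcmem : ∀ i ≤ N, c i ∈ Set.Icc (0:ℝ) 1 := by
    intro i hi
    constructor
    · rw [← hc0]; exact hcmono' 0 i (Nat.zero_le _)
    · rw [← hcN]; exact hcmono' i N hi
  -- integrability on cells
  have hcellint : ∀ i, i < N → IntervalIntegrable f volume (c i) (c (i+1)) := by
    intro i hi
    apply hint.mono_set
    rw [Set.uIcc_of_le (hcmono i), Set.uIcc_of_le zero_le_one]
    exact Set.Icc_subset_Icc (hcmem i (le_of_lt hi)).1 (hcmem (i+1) hi).2
  -- sum of cell integrals equals t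
  have hsum_int : ∑ i ∈ Finset.range N, (∫ x in c i..c (i+1), f x) = t := by
    rw [intervalIntegral.sum_integral_adjacent_intervals hcellint, hc0, hcN, ht]
  -- cell variations
  set v : ℕ → ℝ := fun i => (eVariationOn f (Icc (c i) (c (i+1)))).toReal with hv
  have hcellfin : ∀ i < N, eVariationOn f (Icc (c i) (c (i+1))) ≠ ⊤ := by
    intro i hi
    refine ne_top_of_le_ne_top hfin (eVariationOn.mono f ?_)
    exact Set.Icc_subset_Icc (hcmem i (le_of_lt hi)).1 (hcmem (i+1) hi).2
  have hchain : ∀ n ≤ N, ∑ i ∈ Finset.range n, eVariationOn f (Icc (c i) (c (i+1)))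
      = eVariationOn f (Icc (c 0) (c n)) := by
    intro n hn
    induction n with
    | zero => simp
    | succ p ih =>
      rw [Finset.sum_range_succ, ih (by omega)]
      have step := eVariationOn.Icc_add_Icc f (s := Set.univ)
        (hcmono' 0 p (Nat.zero_le _)) (hcmono p) (Set.mem_univ _)
      simpa only [Set.univ_inter] using step
  have hsumv : ∑ i ∈ Finset.range N, v i ≤ (k:ℝ) * M := by
    have h1 : ∑ i ∈ Finset.range N, eVariationOn f (Icc (c i) (c (i+1)))
        ≤ ENNReal.ofReal ((k:ℝ) * M) := by
      rw [hchain N le_rfl, hc0, hcN]; exact htotal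
    have h2 : (∑ i ∈ Finset.range N, eVariationOn f (Icc (c i) (c (i+1)))).toReal
        = ∑ i ∈ Finset.range N, v i := by
      exact ENNReal.toReal_sum (fun i hi => hcellfin i (Finset.mem_range.mp hi))
    calc ∑ i ∈ Finset.range N, v i
        = (∑ i ∈ Finset.range N, eVariationOn f (Icc (c i) (c (i+1)))).toReal := h2.symm
      _ ≤ (ENNReal.ofReal ((k:ℝ) * M)).toReal := ENNReal.toReal_mono ENNReal.ofReal_ne_top h1
      _ = (k:ℝ) * M := ENNReal.toReal_ofReal (by positivity)
  -- cell estimate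
  have hlen : ∀ i : ℕ, c (i+1) - c i = 1 / N := by
    intro i
    simp only [hc]
    push_cast
    field_simp
    ring
  have hcell : ∀ i < N, |f (c (i+1)) / N - (∫ x in c i..c (i+1), f x)| ≤ v i / N := by
    intro i hi
    have hii := hcellint i hi
    have hsub : (∫ x in c i..c (i+1), (f (c (i+1)) - f x))
        = f (c (i+1)) * (1/N) - (∫ x in c i..c (i+1), f x) := by
      rw [intervalIntegral.integral_sub intervalIntegrable_const hii,
        intervalIntegral.integral_const, hlen i, smul_eq_mul, mul_comm]
    have hbd : ∀ x ∈ Set.uIoc (c i) (c (i+1)), ‖f (c (i+1)) - f x‖ ≤ v i := by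
      intro x hx
      rw [Set.uIoc_of_le (hcmono i)] at hx
      have hxmem : x ∈ Icc (c i) (c (i+1)) := ⟨le_of_lt hx.1, hx.2⟩
      have hrmem : c (i+1) ∈ Icc (c i) (c (i+1)) := ⟨hcmono i, le_rfl⟩
      have hd := eVariationOn.edist_le f hrmem hxmem
      have := ENNReal.toReal_mono (hcellfin i hi) hd
      rwa [edist_dist, ENNReal.toReal_ofReal dist_nonneg, Real.dist_eq,
        ← Real.norm_eq_abs] at this
    have := intervalIntegral.norm_integral_le_of_norm_le_const hbd
    rw [hsub, hlen i] at this
    rw [Real.norm_eq_abs, abs_of_nonneg (by positivity : (0:ℝ) ≤ 1/N)] at this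
    calc |f (c (i+1)) / N - (∫ x in c i..c (i+1), f x)|
        = |f (c (i+1)) * (1/N) - (∫ x in c i..c (i+1), f x)| := by ring_nf
      _ ≤ v i * (1/N) := this
      _ = v i / N := by ring
  -- main Riemann sum estimate
  have hmain : |(∑ i ∈ Finset.range N, f (c (i+1)) / N) - t| ≤ (k:ℝ) * M / N := by
    rw [← hsum_int, ← Finset.sum_sub_distrib]
    calc |∑ i ∈ Finset.range N, (f (c (i+1)) / N - (∫ x in c i..c (i+1), f x))|
        ≤ ∑ i ∈ Finset.range N, |f (c (i+1)) / N - (∫ x in c i..c (i+1), f x)| :=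
          Finset.abs_sum_le_sum_abs _ _
      _ ≤ ∑ i ∈ Finset.range N, v i / N :=
          Finset.sum_le_sum (fun i hi => hcell i (Finset.mem_range.mp hi))
      _ = (∑ i ∈ Finset.range N, v i) / N := by rw [Finset.sum_div]
      _ ≤ (k:ℝ) * M / N := (div_le_div_iff_of_pos_right hNpos).mpr hsumv
  -- bound on t
  have htM : t ≤ M := by
    rw [ht, hM]
    calc (∫ x in (0:ℝ)..1, f x) ≤ ∫ _x in (0:ℝ)..1, t * s :=
        intervalIntegral.integral_mono_on zero_le_one hint intervalIntegrable_const hbound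
      _ = t * s := by simp
  have hf0 : |f 0 - t| ≤ M := by
    have h1 : (0:ℝ) ∈ Set.Icc (0:ℝ) 1 := by constructor <;> norm_num
    have := hnonneg 0 h1
    have := hbound 0 h1
    rw [abs_le]; constructor <;> linarith
  -- put things together
  set B := ∑ i ∈ Finset.range N, f (c (i+1)) with hB
  have hBt : |B - N * t| ≤ (k:ℝ) * M := by
    have h1 : B - N * t = N * ((∑ i ∈ Finset.range N, f (c (i+1)) / N) - t) := by
      rw [hB, mul_sub, Finset.mul_sum]
      congr 1
      exact Finset.sum_congr rfl (fun i _ => by field_simp)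
    rw [h1, abs_mul, abs_of_pos hNpos]
    calc (N:ℝ) * |(∑ i ∈ Finset.range N, f (c (i+1)) / N) - t|
        ≤ (N:ℝ) * ((k:ℝ) * M / N) := by
          exact mul_le_mul_of_nonneg_left hmain hNpos.le
      _ = (k:ℝ) * M := by field_simp
  have hA : (∑ i ∈ Finset.range (N + 1), f ((i : ℝ) / N)) = B + f 0 := by
    rw [Finset.sum_range_succ']
    congr 1
    simp
  rw [hA]
  have hNe : ε * ((N:ℝ) + 1) ≥ (k + 1 : ℝ) * M / t := by
    have h1 : ε * (N:ℝ) ≥ 2 * (k:ℝ) * s := by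
      have := (div_le_iff₀ hε0).mp hNr
      linarith [mul_comm ε (N:ℝ) ▸ this]
    have h2 : (k + 1 : ℝ) * s ≤ 2 * (k:ℝ) * s := by nlinarith
    have h3 : (k + 1 : ℝ) * M / t = (k + 1 : ℝ) * s := by
      rw [hM]; field_simp
    nlinarith
  have key : |(B + f 0) / ((N:ℝ) + 1) - t| ≤ ((k:ℝ) * M + M) / ((N:ℝ) + 1) := by
    have hN1pos : (0:ℝ) < (N:ℝ) + 1 := by linarith
    have heq : (B + f 0) / ((N:ℝ) + 1) - t = ((B - N * t) + (f 0 - t)) / ((N:ℝ) + 1) := by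
      field_simp
      ring
    rw [heq, abs_div, abs_of_pos hN1pos]
    exact (div_le_div_iff_of_pos_right hN1pos).mpr ((abs_add_le _ _).trans (add_le_add hBt hf0))
  refine key.trans ?_
  have hN1pos : (0:ℝ) < (N:ℝ) + 1 := by linarith
  rw [div_le_iff₀ hN1pos]
  have : (k + 1 : ℝ) * M ≤ ε * t * ((N:ℝ) + 1) := by
    have h4 : (k + 1 : ℝ) * M / t ≤ ε * ((N:ℝ) + 1) := hNe
    calc (k + 1 : ℝ) * M = ((k + 1 : ℝ) * M / t) * t := by field_simp
      _ ≤ (ε * ((N:ℝ) + 1)) * t := mul_le_mul_of_nonneg_right h4 htpos.le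
      _ = ε * t * ((N:ℝ) + 1) := by ring
  linarith
end

section
/- Let ℓ : [0,1] → ℝ^d be a segment, ℓ(x) = u + v·x for u, v ∈ ℝ^d. Let C ⊆ ℝ^d be a finite set of k points with weights w : C → [0,∞), and let lip : [0,∞) → [0,∞) be an r-log-Lipschitz function. Define g : [0,1] → [0,∞) by g(x) = min_{c∈C} lip(w(c)·‖c − ℓ(x)‖₂). Then g is 2k-piecewise monotonic, i.e., [0,1] can be partitioned into at most 2k consecutive intervals on each of which g is monotone. -/
/-!
Each function `x ↦ w c * ‖c - (u + x • v)‖` is convex and continuous, hence antitone up to a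
minimiser `t c` and monotone after it. Between consecutive minimisers every function is monotone or
antitone, and the minimum of a continuous monotone `A` and a continuous antitone `B` is monotone up
to a crossing point of `A` and `B` (intermediate value theorem) and antitone after it. So the
minimum decreases on `[0, min t]` and takes two pieces up to each further minimiser: `2k` pieces in
all, which the monotone `lip` preserves.
-/

open Set
open scoped Finset

section PiecewiseMonotone

variable {α β : Type*} [PartialOrder α] [Preorder β] {f : α → β} {p q r : α} {m n : ℕ}

def PiecewiseMonotoneOn (f : α → β) (p q : α) (m : ℕ) : Prop :=
  ∃ a : ℕ → α, a 0 = p ∧ a m = q ∧ (∀ i < m, a i ≤ a (i + 1)) ∧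
    ∀ i < m, MonotoneOn f (Icc (a i) (a (i + 1))) ∨ AntitoneOn f (Icc (a i) (a (i + 1)))

namespace PiecewiseMonotoneOn

theorem of_monotoneOn (hpq : p ≤ q) (h : MonotoneOn f (Icc p q)) :
    PiecewiseMonotoneOn f p q 1 :=
  ⟨fun i => if i = 0 then p else q, rfl, rfl, by simpa using hpq, by simpa using .inl h⟩

theorem of_antitoneOn (hpq : p ≤ q) (h : AntitoneOn f (Icc p q)) :
    PiecewiseMonotoneOn f p q 1 :=
  ⟨fun i => if i = 0 then p else q, rfl, rfl, by simpa using hpq, by simpa using .inr h⟩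

theorem append (h₁ : PiecewiseMonotoneOn f p q m) (h₂ : PiecewiseMonotoneOn f q r n) :
    PiecewiseMonotoneOn f p r (m + n) := by
  obtain ⟨a, ha₀, ha, ha_le, ha_mono⟩ := h₁
  obtain ⟨b, hb₀, hb, hb_le, hb_mono⟩ := h₂
  set c : ℕ → α := fun i => if i ≤ m then a i else b (i - m)
  have hc_left : ∀ i ≤ m, c i = a i := fun i hi => if_pos hi
  have hc_right : ∀ j, c (m + j) = b j := by
    rintro (_ | j)
    · simp [c, ha, hb₀]
    · simp [c]
  have hc_step : ∀ i < m + n, (i < m ∧ c i = a i ∧ c (i + 1) = a (i + 1)) ∨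
      ∃ j < n, c i = b j ∧ c (i + 1) = b (j + 1) := by
    intro i hi
    rcases lt_or_ge i m with him | him
    · exact .inl ⟨him, hc_left i him.le, hc_left (i + 1) him⟩
    · obtain ⟨j, rfl⟩ := Nat.exists_eq_add_of_le him
      exact .inr ⟨j, by omega, hc_right j, hc_right (j + 1)⟩
  refine ⟨c, by simp [c, ha₀], by rw [hc_right, hb], fun i hi => ?_, fun i hi => ?_⟩
  · rcases hc_step i hi with ⟨him, hi₀, hi₁⟩ | ⟨j, hj, hi₀, hi₁⟩
    · rw [hi₀, hi₁]; exact ha_le i him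
    · rw [hi₀, hi₁]; exact hb_le j hj
  · rcases hc_step i hi with ⟨him, hi₀, hi₁⟩ | ⟨j, hj, hi₀, hi₁⟩
    · rw [hi₀, hi₁]; exact ha_mono i him
    · rw [hi₀, hi₁]; exact hb_mono j hj

theorem mono_pieces (h : PiecewiseMonotoneOn f p q m) (hmn : m ≤ n) :
    PiecewiseMonotoneOn f p q n := by
  induction n, hmn using Nat.le_induction with
  | base => exact h
  | succ n _ ih =>
    exact ih.append (of_monotoneOn le_rfl ((subsingleton_Icc_of_ge le_rfl).monotoneOn f))

theorem comp_monotoneOn {γ : Type*} [Preorder γ] {g : β → γ} {s : Set β}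
    (h : PiecewiseMonotoneOn f p q m) (hg : MonotoneOn g s) (hf : ∀ x, f x ∈ s) :
    PiecewiseMonotoneOn (g ∘ f) p q m := by
  obtain ⟨a, ha₀, ha, ha_le, ha_mono⟩ := h
  refine ⟨a, ha₀, ha, ha_le, fun i hi => ?_⟩
  rcases ha_mono i hi with hmono | hanti
  · exact .inl (hg.comp hmono fun x _ => hf x)
  · exact .inr (hg.comp_AntitoneOn hanti fun x _ => hf x)

end PiecewiseMonotoneOn

end PiecewiseMonotone

section FiniteMin

variable {ι α β : Type*}

theorem MonotoneOn.finset_inf'_apply [Preorder α] [SemilatticeInf β] {S : Finset ι}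
    (hS : S.Nonempty) {f : ι → α → β} {s : Set α} (h : ∀ i ∈ S, MonotoneOn (f i) s) :
    MonotoneOn (fun x => S.inf' hS (f · x)) s :=
  fun _ hx _ hy hxy => Finset.inf'_mono_fun fun i hi => h i hi hx hy hxy

theorem AntitoneOn.finset_inf'_apply [Preorder α] [SemilatticeInf β] {S : Finset ι}
    (hS : S.Nonempty) {f : ι → α → β} {s : Set α} (h : ∀ i ∈ S, AntitoneOn (f i) s) :
    AntitoneOn (fun x => S.inf' hS (f · x)) s :=
  fun _ hx _ hy hxy => Finset.inf'_mono_fun fun i hi => h i hi hx hy hxy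

theorem MonotoneOn.map_finset_inf' [LinearOrder α] [LinearOrder β] {g : α → β} {s : Set α}
    (hg : MonotoneOn g s) {S : Finset ι} (hS : S.Nonempty) {f : ι → α}
    (hf : ∀ i ∈ S, f i ∈ s) :
    g (S.inf' hS f) = S.inf' hS (g ∘ f) := by
  obtain ⟨i, hi, hmin⟩ := S.exists_mem_eq_inf' hS f
  rw [hmin]
  refine le_antisymm (Finset.le_inf' _ _ fun j hj => hg (hf i hi) (hf j hj) ?_) (S.inf'_le _ hi)
  rw [← hmin]
  exact S.inf'_le f hj

end FiniteMin

section MinMonotoneAntitone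

variable {α β : Type*} [LinearOrder α] [LinearOrder β] {A B : α → β} {p q s : α}

theorem monotoneOn_min_of_le (hA : MonotoneOn A (Icc p q)) (hB : AntitoneOn B (Icc p q))
    (hs : s ∈ Icc p q) (hAB : A s ≤ B s) : MonotoneOn (fun x => min (A x) (B x)) (Icc p s) := by
  have hsub : Icc p s ⊆ Icc p q := Icc_subset_Icc_right hs.2
  refine (hA.mono hsub).congr fun x hx => (min_eq_left ?_).symm
  calc A x ≤ A s := hA (hsub hx) hs hx.2
    _ ≤ B s := hAB
    _ ≤ B x := hB (hsub hx) hs hx.2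

theorem antitoneOn_min_of_le (hA : MonotoneOn A (Icc p q)) (hB : AntitoneOn B (Icc p q))
    (hs : s ∈ Icc p q) (hBA : B s ≤ A s) : AntitoneOn (fun x => min (A x) (B x)) (Icc s q) := by
  have hsub : Icc s q ⊆ Icc p q := Icc_subset_Icc_left hs.1
  refine (hB.mono hsub).congr fun x hx => (min_eq_right ?_).symm
  calc B x ≤ B s := hB hs (hsub hx) hx.1
    _ ≤ A s := hBA
    _ ≤ A x := hA hs (hsub hx) hx.1

end MinMonotoneAntitone

section IntermediateValue

variable {ι α β : Type*} [ConditionallyCompleteLinearOrder α] [TopologicalSpace α]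
  [OrderTopology α] [DenselyOrdered α] [LinearOrder β] [TopologicalSpace β]
  [OrderClosedTopology β] {p q : α}

theorem exists_monotoneOn_antitoneOn_min {A B : α → β} (hpq : p ≤ q)
    (hA : MonotoneOn A (Icc p q)) (hB : AntitoneOn B (Icc p q))
    (hAc : ContinuousOn A (Icc p q)) (hBc : ContinuousOn B (Icc p q)) :
    ∃ s ∈ Icc p q, MonotoneOn (fun x => min (A x) (B x)) (Icc p s) ∧
      AntitoneOn (fun x => min (A x) (B x)) (Icc s q) := by
  have hp : p ∈ Icc p q := left_mem_Icc.2 hpq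
  have hq : q ∈ Icc p q := right_mem_Icc.2 hpq
  by_cases hABq : A q ≤ B q
  · exact ⟨q, hq, monotoneOn_min_of_le hA hB hq hABq,
      (subsingleton_Icc_of_ge le_rfl).antitoneOn _⟩
  by_cases hBAp : B p ≤ A p
  · exact ⟨p, hp, (subsingleton_Icc_of_ge le_rfl).monotoneOn _,
      antitoneOn_min_of_le hA hB hp hBAp⟩
  obtain ⟨s, hs, hAB⟩ := isPreconnected_Icc.intermediate_value₂ hp hq hAc hBc
    (not_le.1 hBAp).le (not_le.1 hABq).le
  exact ⟨s, hs, monotoneOn_min_of_le hA hB hs hAB.le, antitoneOn_min_of_le hA hB hs hAB.ge⟩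

theorem exists_monotoneOn_antitoneOn_finset_inf' {S : Finset ι} (hS : S.Nonempty)
    {f : ι → α → β} (hpq : p ≤ q)
    (hf : ∀ i ∈ S, MonotoneOn (f i) (Icc p q) ∨ AntitoneOn (f i) (Icc p q))
    (hc : ∀ i ∈ S, ContinuousOn (f i) (Icc p q)) :
    ∃ s ∈ Icc p q, MonotoneOn (fun x => S.inf' hS (f · x)) (Icc p s) ∧
      AntitoneOn (fun x => S.inf' hS (f · x)) (Icc s q) := by
  classical
  set U := S.filter fun i => MonotoneOn (f i) (Icc p q)
  set D := S.filter fun i => ¬MonotoneOn (f i) (Icc p q)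
  have hU : ∀ i ∈ U, MonotoneOn (f i) (Icc p q) := fun i hi => (Finset.mem_filter.1 hi).2
  have hD : ∀ i ∈ D, AntitoneOn (f i) (Icc p q) := fun i hi =>
    (hf i (Finset.mem_filter.1 hi).1).resolve_left (Finset.mem_filter.1 hi).2
  rcases D.eq_empty_or_nonempty with hDe | hDne
  · refine ⟨q, right_mem_Icc.2 hpq, MonotoneOn.finset_inf'_apply hS fun i hi => ?_,
      (subsingleton_Icc_of_ge le_rfl).antitoneOn _⟩
    by_contra h
    exact Finset.eq_empty_iff_forall_notMem.1 hDe i (Finset.mem_filter.2 ⟨hi, h⟩)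
  rcases U.eq_empty_or_nonempty with hUe | hUne
  · refine ⟨p, left_mem_Icc.2 hpq, (subsingleton_Icc_of_ge le_rfl).monotoneOn _,
      AntitoneOn.finset_inf'_apply hS fun i hi => (hf i hi).resolve_left fun h => ?_⟩
    exact Finset.eq_empty_iff_forall_notMem.1 hUe i (Finset.mem_filter.2 ⟨hi, h⟩)
  have hsplit : (fun x => S.inf' hS (f · x)) =
      fun x => min (U.inf' hUne (f · x)) (D.inf' hDne (f · x)) := by
    funext x
    rw [← Finset.inf'_union]
    exact Finset.inf'_congr hS (Finset.filter_union_filter_not_eq _ S).symm fun _ _ => rfl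
  rw [hsplit]
  exact exists_monotoneOn_antitoneOn_min hpq (.finset_inf'_apply hUne hU)
    (.finset_inf'_apply hDne hD)
    (.finset_inf'_apply hUne fun i hi => hc i (Finset.filter_subset _ _ hi))
    (.finset_inf'_apply hDne fun i hi => hc i (Finset.filter_subset _ _ hi))

theorem piecewiseMonotoneOn_finset_inf'_of_antitoneOn_monotoneOn {S : Finset ι}
    (hS : S.Nonempty) {f : ι → α → β} {t : ι → α}
    (hc : ∀ i ∈ S, ContinuousOn (f i) (Icc p q))
    (ht : ∀ i ∈ S, t i ≤ q) (hanti : ∀ i ∈ S, AntitoneOn (f i) (Icc p (t i)))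
    (hmono : ∀ i ∈ S, MonotoneOn (f i) (Icc (t i) q)) {x : α} (hx : x ∈ Icc p q) :
    PiecewiseMonotoneOn (fun y => S.inf' hS (f · y)) x q (2 * #(S.filter (x < t ·)) + 1) := by
  induction hn : #(S.filter (x < t ·)) using Nat.strong_induction_on generalizing x with
  | _ n ih =>
    rcases (S.filter (x < t ·)).eq_empty_or_nonempty with hempty | hne
    · have hle : ∀ i ∈ S, t i ≤ x := fun i hi => not_lt.1 fun hxi =>
        Finset.eq_empty_iff_forall_notMem.1 hempty i (Finset.mem_filter.2 ⟨hi, hxi⟩)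
      exact (PiecewiseMonotoneOn.of_monotoneOn hx.2 (MonotoneOn.finset_inf'_apply hS
        fun i hi => (hmono i hi).mono (Icc_subset_Icc_left (hle i hi)))).mono_pieces (by omega)
    -- `t j` is the first turning point right of `x`, so no `f i` changes direction on `[x, t j]`.
    obtain ⟨j, hj, hjmin⟩ := (S.filter (x < t ·)).exists_mem_eq_inf' hne t
    have hxj : x < t j := (Finset.mem_filter.1 hj).2
    have hjq : t j ≤ q := ht j (Finset.mem_filter.1 hj).1
    have hpieces :
        ∀ i ∈ S, MonotoneOn (f i) (Icc x (t j)) ∨ AntitoneOn (f i) (Icc x (t j)) := by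
      intro i hi
      by_cases hxi : x < t i
      · refine .inr ((hanti i hi).mono (Icc_subset_Icc hx.1 ?_))
        exact hjmin ▸ Finset.inf'_le t (Finset.mem_filter.2 ⟨hi, hxi⟩)
      · exact .inl ((hmono i hi).mono (Icc_subset_Icc (not_lt.1 hxi) hjq))
    obtain ⟨s, hs, hmono_s, hanti_s⟩ :=
      exists_monotoneOn_antitoneOn_finset_inf' hS hxj.le hpieces
        fun i hi => (hc i hi).mono (Icc_subset_Icc hx.1 hjq)
    have hlt : #(S.filter (t j < t ·)) < n := by
      rw [← hn]
      refine Finset.card_lt_card ((Finset.ssubset_iff_of_subset fun i hi => ?_).2 ⟨j, hj, ?_⟩)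
      · simp only [Finset.mem_filter] at hi ⊢
        exact ⟨hi.1, hxj.trans hi.2⟩
      · simp
    have hrest := ih _ hlt ⟨hx.1.trans hxj.le, hjq⟩ rfl
    exact (((PiecewiseMonotoneOn.of_monotoneOn hs.1 hmono_s).append
      (.of_antitoneOn hs.2 hanti_s)).append hrest).mono_pieces (by omega)

end IntermediateValue

theorem ConvexOn.exists_antitoneOn_monotoneOn {f : ℝ → ℝ} {p q : ℝ} (hpq : p ≤ q)
    (hf : ConvexOn ℝ (Icc p q) f) (hc : ContinuousOn f (Icc p q)) :
    ∃ t ∈ Icc p q, AntitoneOn f (Icc p t) ∧ MonotoneOn f (Icc t q) := by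
  obtain ⟨t, ht, hmin⟩ := isCompact_Icc.exists_isMinOn (nonempty_Icc.2 hpq) hc
  refine ⟨t, ht, fun x hx y hy hxy => ?_, fun x hx y hy hxy => ?_⟩
  · have hx' : x ∈ Icc p q := ⟨hx.1, hx.2.trans ht.2⟩
    rcases hy.2.eq_or_lt with rfl | hyt
    · exact hmin hx'
    · exact hf.le_left_of_right_le'' hx' ht hxy hyt (hmin ⟨hx.1.trans hxy, hyt.le.trans ht.2⟩)
  · have hy' : y ∈ Icc p q := ⟨ht.1.trans hy.1, hy.2⟩
    rcases hx.1.eq_or_lt with rfl | htx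
    · exact hmin hy'
    · exact hf.le_right_of_left_le'' ht hy' htx hxy (hmin ⟨ht.1.trans htx.le, hxy.trans hy.2⟩)

theorem piecewiseMonotoneOn_finset_inf'_of_convexOn {ι : Type*} {S : Finset ι}
    (hS : S.Nonempty) {f : ι → ℝ → ℝ} {p q : ℝ} (hpq : p ≤ q)
    (hconv : ∀ i ∈ S, ConvexOn ℝ (Icc p q) (f i))
    (hc : ∀ i ∈ S, ContinuousOn (f i) (Icc p q)) :
    PiecewiseMonotoneOn (fun x => S.inf' hS (f · x)) p q (2 * #S) := by
  choose! t ht hanti hmono using fun i hi =>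
    (hconv i hi).exists_antitoneOn_monotoneOn hpq (hc i hi)
  obtain ⟨i₀, hi₀, hi₀min⟩ := S.exists_mem_eq_inf' hS t
  have hfirst : PiecewiseMonotoneOn (fun x => S.inf' hS (f · x)) p (t i₀) 1 :=
    .of_antitoneOn (ht i₀ hi₀).1 (AntitoneOn.finset_inf'_apply hS fun i hi =>
      (hanti i hi).mono (Icc_subset_Icc_right (hi₀min ▸ S.inf'_le t hi)))
  have hrest := piecewiseMonotoneOn_finset_inf'_of_antitoneOn_monotoneOn hS hc
    (fun i hi => (ht i hi).2) hanti hmono (ht i₀ hi₀)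
  have hcard : #(S.filter (t i₀ < t ·)) < #S :=
    Finset.card_lt_card (Finset.filter_ssubset.2 ⟨i₀, hi₀, lt_irrefl _⟩)
  exact (hfirst.append hrest).mono_pieces (by omega)

theorem convexOn_norm_sub_add_smul {E : Type*} [NormedAddCommGroup E] [NormedSpace ℝ E]
    (c u v : E) : ConvexOn ℝ univ fun x : ℝ => ‖c - (u + x • v)‖ := by
  have hline : (fun x : ℝ => ‖c - (u + x • v)‖) =
      norm ∘ AffineMap.lineMap (c - u) (c - u - v) := by
    funext x
    simp only [Function.comp_apply, AffineMap.lineMap_apply, vsub_eq_sub, vadd_eq_add]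
    congr 1
    module
  rw [hline]
  exact (convexOn_norm convex_univ).comp_affineMap _

theorem min_dist_to_segment_piecewise_monotone_general (d k : ℕ)
    (u v : EuclideanSpace ℝ (Fin d))
    (C : Finset (EuclideanSpace ℝ (Fin d))) (hC : C.Nonempty) (hCcard : C.card = k)
    (w : EuclideanSpace ℝ (Fin d) → ℝ) (hw : ∀ c ∈ C, 0 ≤ w c)
    (lip : ℝ → ℝ)
    (hmono : ∀ x y, 0 ≤ x → x ≤ y → lip x ≤ lip y)
    (g : ℝ → ℝ)
    (hg : ∀ x : ℝ, g x = C.inf' hC (fun c => lip (w c * ‖c - (u + x • v)‖))) :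
    ∃ (m : ℕ) (a : ℕ → ℝ), m ≤ 2 * k ∧ a 0 = 0 ∧ a m = 1 ∧
      (∀ i < m, a i ≤ a (i + 1)) ∧
      (∀ i < m, MonotoneOn g (Set.Icc (a i) (a (i + 1))) ∨
        AntitoneOn g (Set.Icc (a i) (a (i + 1)))) := by
  subst hCcard
  have hdist_nonneg : ∀ x : ℝ, ∀ c ∈ C, 0 ≤ w c * ‖c - (u + x • v)‖ :=
    fun x c hc => mul_nonneg (hw c hc) (norm_nonneg _)
  set φ : ℝ → ℝ := fun x => C.inf' hC fun c => w c * ‖c - (u + x • v)‖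
  have hφ : PiecewiseMonotoneOn φ 0 1 (2 * #C) :=
    piecewiseMonotoneOn_finset_inf'_of_convexOn hC zero_le_one
      (fun c hc => ((convexOn_norm_sub_add_smul c u v).smul (hw c hc)).subset (subset_univ _)
        (convex_Icc 0 1))
      fun c _ => by fun_prop
  have hlip : MonotoneOn lip (Ici 0) := fun x hx y _ hxy => hmono x y hx hxy
  have hgφ : g = lip ∘ φ := funext fun x => by
    rw [hg, Function.comp_apply, hlip.map_finset_inf' hC (hdist_nonneg x)]
    rfl
  obtain ⟨a, ha₀, ha₁, ha_le, ha_mono⟩ :=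
    hgφ ▸ hφ.comp_monotoneOn hlip fun x => Finset.le_inf' _ _ (hdist_nonneg x)
  exact ⟨2 * #C, a, le_rfl, ha₀, ha₁, ha_le, ha_mono⟩

theorem min_dist_to_segment_piecewise_monotone (d k : ℕ) (r : ℝ) (hr : 0 ≤ r)
    (u v : EuclideanSpace ℝ (Fin d))
    (C : Finset (EuclideanSpace ℝ (Fin d))) (hC : C.Nonempty) (hCcard : C.card = k)
    (w : EuclideanSpace ℝ (Fin d) → ℝ) (hw : ∀ c ∈ C, 0 ≤ w c)
    (lip : ℝ → ℝ)
    (hmono : ∀ x y, 0 ≤ x → x ≤ y → lip x ≤ lip y)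
    (hnonneg : ∀ x, 0 ≤ x → 0 ≤ lip x)
    (hlip : ∀ c x, 1 ≤ c → 0 ≤ x → lip (c * x) ≤ c ^ r * lip x)
    (g : ℝ → ℝ)
    (hg : ∀ x : ℝ, g x = C.inf' hC (fun c => lip (w c * ‖c - (u + x • v)‖))) :
    ∃ (m : ℕ) (a : ℕ → ℝ), m ≤ 2 * k ∧ a 0 = 0 ∧ a m = 1 ∧
      (∀ i < m, a i ≤ a (i + 1)) ∧
      (∀ i < m, MonotoneOn g (Set.Icc (a i) (a (i + 1))) ∨
        AntitoneOn g (Set.Icc (a i) (a (i + 1)))) :=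
  min_dist_to_segment_piecewise_monotone_general d k u v C hC hCcard w hw lip hmono g hg
end

section
/- Let ℓ : [0,1] → ℝ^d be a segment ℓ(x) = u + v·x, let C be a finite set of k ≥ 1 points in ℝ^d with weights w : C → [0,∞), let lip be an r-log-Lipschitz function, and define D(x) := min_{c∈C} lip(w(c)·‖c − ℓ(x)‖₂). Then for every integer n ≥ 10k and every x ∈ [0,1], D(x) / (∑_{i=1}^n D(i/n)) ≤ (20k)^{r+1}/n, provided the denominator is positive. -/
lemma pyth_aux {E : Type*} [NormedAddCommGroup E] [InnerProductSpace ℝ E]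
    (a v : E) (hv : v ≠ 0) (y : ℝ) :
    ‖a - y • v‖ ^ 2 = ‖a - ((inner ℝ a v : ℝ) / ‖v‖ ^ 2) • v‖ ^ 2
      + (y - (inner ℝ a v : ℝ) / ‖v‖ ^ 2) ^ 2 * ‖v‖ ^ 2 := by
  set p : ℝ := (inner ℝ a v : ℝ) / ‖v‖ ^ 2 with hp
  have hv2 : ‖v‖ ^ 2 ≠ 0 := pow_ne_zero _ (norm_ne_zero_iff.mpr hv)
  have hpv : p * ‖v‖ ^ 2 = (inner ℝ a v : ℝ) := by rw [hp]; field_simp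
  have h1 : a - y • v = (a - p • v) + (p - y) • v := by
    rw [sub_smul]; abel
  rw [h1, norm_add_sq_real]
  have h2 : (inner ℝ (a - p • v) ((p - y) • v) : ℝ) = 0 := by
    rw [real_inner_smul_right, inner_sub_left, real_inner_smul_left,
      real_inner_self_eq_norm_sq, ← hpv]
    ring
  rw [h2, norm_smul, Real.norm_eq_abs, mul_pow, sq_abs]
  ring

-- key localization lemma: a "bad" parameter y is close to the projection parameter p
lemma keylem {E : Type*} [NormedAddCommGroup E] [InnerProductSpace ℝ E]
    (a v : E) (M x y : ℝ) (hM : 1 < M) (hxy : |x - y| ≤ 1)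
    (hbad : M * ‖a - y • v‖ < ‖a - x • v‖) :
    |y - (inner ℝ a v : ℝ) / ‖v‖ ^ 2| < 1 / (M - 1) := by
  by_cases hv : v = 0
  · exfalso
    subst hv
    simp only [smul_zero, sub_zero] at hbad
    nlinarith [norm_nonneg a]
  · have hpy := pyth_aux a v hv y
    have hpx := pyth_aux a v hv x
    set p : ℝ := (inner ℝ a v : ℝ) / ‖v‖ ^ 2 with hp
    set dd : ℝ := ‖a - p • v‖ with hdd
    have hV : 0 < ‖v‖ ^ 2 := pow_pos (norm_pos_iff.mpr hv) 2
    have hgy : 0 ≤ ‖a - y • v‖ := norm_nonneg _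
    have hsq : (M * ‖a - y • v‖) ^ 2 < ‖a - x • v‖ ^ 2 := by
      nlinarith [norm_nonneg (a - x • v), mul_nonneg (le_of_lt (lt_trans one_pos hM)) hgy]
    have hsq' : M ^ 2 * dd ^ 2 + M ^ 2 * ((y - p) ^ 2 * ‖v‖ ^ 2)
        < dd ^ 2 + (x - p) ^ 2 * ‖v‖ ^ 2 := by nlinarith [hsq]
    have hMd : dd ^ 2 ≤ M ^ 2 * dd ^ 2 := by
      have h0 : 0 ≤ (M ^ 2 - 1) * dd ^ 2 := mul_nonneg (by nlinarith) (sq_nonneg dd)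
      nlinarith [h0]
    have e : (M ^ 2 * (y - p) ^ 2) * ‖v‖ ^ 2 < (x - p) ^ 2 * ‖v‖ ^ 2 := by nlinarith
    have e2 : M ^ 2 * (y - p) ^ 2 < (x - p) ^ 2 := (mul_lt_mul_iff_left₀ hV).mp e
    have h2 : (M * |y - p|) ^ 2 < |x - p| ^ 2 := by
      rw [mul_pow, sq_abs, sq_abs]; exact e2
    have h3 : M * |y - p| < |x - p| :=
      lt_of_pow_lt_pow_left₀ 2 (abs_nonneg _) h2
    have h4 : |x - p| ≤ 1 + |y - p| := by
      calc |x - p| ≤ |x - y| + |y - p| := abs_sub_le x y p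
        _ ≤ 1 + |y - p| := by linarith
    rw [lt_div_iff₀ (by linarith)]
    nlinarith [abs_nonneg (y - p)]

lemma card_le_of_diam {S : Finset ℕ} {L : ℝ} (hL : 0 ≤ L)
    (h : ∀ i ∈ S, ∀ j ∈ S, (i : ℝ) - j ≤ L) : (S.card : ℝ) ≤ L + 1 := by
  rcases S.eq_empty_or_nonempty with rfl | hS
  · simp; linarith
  · have h1 : S ⊆ Finset.Icc (S.min' hS) (S.max' hS) :=
      fun i hi => Finset.mem_Icc.mpr ⟨S.min'_le i hi, S.le_max' i hi⟩
    have h2 := Finset.card_le_card h1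
    rw [Nat.card_Icc] at h2
    have h4 : S.min' hS ≤ S.max' hS := S.min'_le _ (S.max'_mem hS)
    have h3 := h _ (S.max'_mem hS) _ (S.min'_mem hS)
    have h5 : (S.card : ℝ) ≤ (S.max' hS : ℝ) - (S.min' hS : ℝ) + 1 := by
      have : (S.card : ℝ) ≤ ((S.max' hS + 1 - S.min' hS : ℕ) : ℝ) := by exact_mod_cast h2
      rw [Nat.cast_sub (by omega)] at this
      push_cast at this
      linarith
    linarith

set_option maxHeartbeats 1000000 in
theorem segment_sensitivity_bound (d k : ℕ) (hk : 1 ≤ k) (r : ℝ) (hr : 0 ≤ r)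
    (u v : EuclideanSpace ℝ (Fin d))
    (C : Finset (EuclideanSpace ℝ (Fin d))) (hC : C.Nonempty) (hCcard : C.card = k)
    (w : EuclideanSpace ℝ (Fin d) → ℝ) (hw : ∀ c ∈ C, 0 ≤ w c)
    (lip : ℝ → ℝ)
    (hmono : ∀ x y, 0 ≤ x → x ≤ y → lip x ≤ lip y)
    (hnonneg : ∀ x, 0 ≤ x → 0 ≤ lip x)
    (hlip : ∀ c x, 1 ≤ c → 0 ≤ x → lip (c * x) ≤ c ^ r * lip x)
    (D : ℝ → ℝ)
    (hD : ∀ x : ℝ, D x = C.inf' hC (fun c => lip (w c * ‖c - (u + x • v)‖)))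
    (n : ℕ) (hn : 10 * k ≤ n)
    (hpos : 0 < ∑ i ∈ Finset.Icc 1 n, D ((i : ℝ) / n))
    (x : ℝ) (hx : x ∈ Set.Icc (0:ℝ) 1) :
    D x / (∑ i ∈ Finset.Icc 1 n, D ((i : ℝ) / n)) ≤ (20 * k : ℝ) ^ (r + 1) / n := by
  obtain ⟨hx0, hx1⟩ := hx
  have hkR : (1 : ℝ) ≤ (k : ℝ) := by exact_mod_cast hk
  have hn10 : 10 ≤ n := by omega
  have hnR : (10 : ℝ) * k ≤ (n : ℝ) := by exact_mod_cast hn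
  have hnpos : (0 : ℝ) < n := by
    have : (0:ℕ) < n := by omega
    exact_mod_cast this
  set M : ℝ := 20 * (k : ℝ) with hMdef
  have hM20 : (20 : ℝ) ≤ M := by nlinarith
  have hM0 : (0 : ℝ) < M := by linarith
  have hMr : (0 : ℝ) < M ^ r := Real.rpow_pos_of_pos hM0 r
  -- nonnegativity of D
  have hfnn : ∀ c ∈ C, ∀ y : ℝ, 0 ≤ w c * ‖c - (u + y • v)‖ :=
    fun c hc y => mul_nonneg (hw c hc) (norm_nonneg _)
  have hDnn : ∀ y : ℝ, 0 ≤ D y := by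
    intro y
    rw [hD y]
    exact Finset.le_inf' hC _ (fun c hc => hnonneg _ (hfnn c hc y))
  -- frame per-index values
  set S : ℝ := ∑ i ∈ Finset.Icc 1 n, D ((i : ℝ) / n) with hSdef
  -- good set
  set G : Finset ℕ := (Finset.Icc 1 n).filter
    (fun i => ∀ c ∈ C, w c * ‖c - (u + x • v)‖ ≤ M * (w c * ‖c - (u + ((i:ℝ)/n) • v)‖)) with hGdef
  -- Step A : on good indices, D x ≤ M^r * D(i/n)
  have stepA : ∀ i ∈ G, D x ≤ M ^ r * D ((i : ℝ) / n) := by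
    intro i hi
    rw [hGdef, Finset.mem_filter] at hi
    obtain ⟨c₀, hc₀, hceq⟩ :=
      Finset.exists_mem_eq_inf' hC (fun c => lip (w c * ‖c - (u + ((i:ℝ)/n) • v)‖))
    have h1 : D x ≤ lip (w c₀ * ‖c₀ - (u + x • v)‖) := by
      rw [hD x]; exact Finset.inf'_le _ hc₀
    have h2 : lip (w c₀ * ‖c₀ - (u + x • v)‖)
        ≤ lip (M * (w c₀ * ‖c₀ - (u + ((i:ℝ)/n) • v)‖)) :=
      hmono _ _ (hfnn c₀ hc₀ x) (hi.2 c₀ hc₀)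
    have h3 : lip (M * (w c₀ * ‖c₀ - (u + ((i:ℝ)/n) • v)‖))
        ≤ M ^ r * lip (w c₀ * ‖c₀ - (u + ((i:ℝ)/n) • v)‖) :=
      hlip M _ (by linarith) (hfnn c₀ hc₀ _)
    have h4 : D ((i:ℝ)/n) = lip (w c₀ * ‖c₀ - (u + ((i:ℝ)/n) • v)‖) := by
      rw [hD]; exact hceq
    rw [h4]; linarith
  -- Step B : good set is large
  -- bad indices for a fixed center c
  set badc : EuclideanSpace ℝ (Fin d) → Finset ℕ := fun c =>
    (Finset.Icc 1 n).filter
      (fun i => M * (w c * ‖c - (u + ((i:ℝ)/n) • v)‖) < w c * ‖c - (u + x • v)‖) with hbadc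
  have hIcc_sub : ∀ i ∈ Finset.Icc 1 n, i ∉ G → i ∈ C.biUnion badc := by
    intro i hiI hiG
    rw [hGdef, Finset.mem_filter] at hiG
    push_neg at hiG
    obtain ⟨c, hc, hlt⟩ := hiG hiI
    exact Finset.mem_biUnion.mpr ⟨c, hc, by
      rw [hbadc]; exact Finset.mem_filter.mpr ⟨hiI, hlt⟩⟩
  -- each badc has small cardinality
  have hM1pos : (0 : ℝ) < M - 1 := by linarith
  have hbadcard : ∀ c ∈ C, ((badc c).card : ℝ) ≤ 2 * n / (M - 1) + 1 := by
    intro c hc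
    apply card_le_of_diam (div_nonneg (by linarith) (by linarith))
    intro i hi j hj
    rw [hbadc, Finset.mem_filter, Finset.mem_Icc] at hi hj
    -- establish the localization for each bad index
    have key : ∀ m : ℕ, 1 ≤ m → m ≤ n →
        M * (w c * ‖c - (u + ((m:ℝ)/n) • v)‖) < w c * ‖c - (u + x • v)‖ →
        |(m:ℝ)/n - (inner ℝ (c - u) v : ℝ) / ‖v‖ ^ 2| < 1 / (M - 1) := by
      intro m hm1 hmn hbadm
      have hwpos : 0 < w c := by
        rcases (hw c hc).lt_or_eq with h | h
        · exact h
        · exfalso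
          rw [← h, zero_mul, mul_zero, zero_mul] at hbadm
          exact lt_irrefl 0 hbadm
      have hlt : M * ‖c - (u + ((m:ℝ)/n) • v)‖ < ‖c - (u + x • v)‖ := by
        have h' : w c * (M * ‖c - (u + ((m:ℝ)/n) • v)‖) < w c * ‖c - (u + x • v)‖ := by
          linarith [hbadm, mul_comm (w c) (M * ‖c - (u + ((m:ℝ)/n) • v)‖)]
        exact (mul_lt_mul_iff_right₀ hwpos).mp h'
      have hrw : ∀ y : ℝ, c - (u + y • v) = (c - u) - y • v := by intro y; abel
      rw [hrw, hrw] at hlt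
      have hmn' : (m : ℝ) / n ≤ 1 := by
        rw [div_le_one hnpos]; exact_mod_cast hmn
      have hmn0 : (0 : ℝ) ≤ (m : ℝ) / n := by positivity
      have habs : |x - (m:ℝ)/n| ≤ 1 := by
        rw [abs_sub_le_iff]; constructor <;> linarith
      exact keylem (c - u) v M x ((m:ℝ)/n) (by linarith) habs hlt
    have hi' := key i hi.1.1 hi.1.2 hi.2
    have hj' := key j hj.1.1 hj.1.2 hj.2
    set p : ℝ := (inner ℝ (c - u) v : ℝ) / ‖v‖ ^ 2
    have htri : |(i:ℝ)/n - (j:ℝ)/n| ≤ |(i:ℝ)/n - p| + |p - (j:ℝ)/n| := abs_sub_le _ _ _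
    rw [abs_sub_comm p ((j:ℝ)/n)] at htri
    have h6 : (i:ℝ)/n - (j:ℝ)/n ≤ 2 / (M - 1) := by
      have h2r : 2 / (M - 1) = 1 / (M - 1) + 1 / (M - 1) := by ring
      have := le_abs_self ((i:ℝ)/n - (j:ℝ)/n)
      rw [h2r]
      linarith
    have h7 : (i:ℝ) - j = n * ((i:ℝ)/n - (j:ℝ)/n) := by field_simp
    rw [h7]
    calc (n:ℝ) * ((i:ℝ)/n - (j:ℝ)/n) ≤ n * (2 / (M - 1)) := by
          apply mul_le_mul_of_nonneg_left h6 (le_of_lt hnpos)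
      _ = 2 * n / (M - 1) := by ring
  -- cardinality of the complement of G
  have hGsub : G ⊆ Finset.Icc 1 n := by rw [hGdef]; exact Finset.filter_subset _ _
  have hGcard : (n : ℝ) - (k : ℝ) * (2 * n / (M - 1) + 1) ≤ (G.card : ℝ) := by
    set B := Finset.Icc 1 n \ G with hB
    have hsplit : G.card + B.card = n := by
      rw [hB, Finset.card_sdiff_of_subset hGsub, Nat.card_Icc]
      have : G.card ≤ (Finset.Icc 1 n).card := Finset.card_le_card hGsub
      rw [Nat.card_Icc] at this
      omega
    have hBsub : B ⊆ C.biUnion badc := by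
      intro i hi
      rw [hB, Finset.mem_sdiff] at hi
      exact hIcc_sub i hi.1 hi.2
    have hBcard : (B.card : ℝ) ≤ (k : ℝ) * (2 * n / (M - 1) + 1) := by
      have h1 : B.card ≤ ∑ c ∈ C, (badc c).card :=
        le_trans (Finset.card_le_card hBsub) (Finset.card_biUnion_le)
      have h2 : ∑ c ∈ C, ((badc c).card : ℝ) ≤ (k : ℝ) * (2 * n / (M - 1) + 1) := by
        calc ∑ c ∈ C, ((badc c).card : ℝ) ≤ ∑ _c ∈ C, (2 * n / (M - 1) + 1) :=
              Finset.sum_le_sum hbadcard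
          _ = (k : ℝ) * (2 * n / (M - 1) + 1) := by
              rw [Finset.sum_const, hCcard, nsmul_eq_mul]
      calc (B.card : ℝ) ≤ ((∑ c ∈ C, (badc c).card : ℕ) : ℝ) := by exact_mod_cast h1
        _ = ∑ c ∈ C, ((badc c).card : ℝ) := by push_cast; ring
        _ ≤ _ := h2
    have hfin : (G.card : ℝ) + (B.card : ℝ) = n := by exact_mod_cast hsplit
    linarith
  -- hence G is large : at least n / M points
  have hGlarge : (n : ℝ) / M ≤ (G.card : ℝ) := by
    have hM1 : (19 : ℝ) * k ≤ M - 1 := by nlinarith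
    have hd1 : (k : ℝ) * (2 * n / (M - 1)) ≤ 2 * n / 19 := by
      have e : (k : ℝ) * (2 * n / (M - 1)) = 2 * k * n / (M - 1) := by ring
      rw [e, div_le_div_iff₀ hM1pos (by norm_num : (0:ℝ) < 19)]
      nlinarith [mul_le_mul_of_nonneg_left hM1 (le_of_lt hnpos)]
    have hd2 : (k : ℝ) ≤ n / 10 := by linarith
    have hd3 : (n : ℝ) / M ≤ n / 20 := by
      rw [div_le_div_iff₀ hM0 (by norm_num : (0:ℝ) < 20)]
      nlinarith
    have expand : (k : ℝ) * (2 * n / (M - 1) + 1)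
        = (k : ℝ) * (2 * n / (M - 1)) + k := by ring
    rw [expand] at hGcard
    linarith
  -- Step C : lower bound on the sum
  have hsum1 : ∑ i ∈ G, D ((i : ℝ) / n) ≤ S := by
    rw [hSdef]
    apply Finset.sum_le_sum_of_subset_of_nonneg (by rw [hGdef]; exact Finset.filter_subset _ _)
    intro i _ _
    exact hDnn _
  have hsum2 : (G.card : ℝ) * (D x / M ^ r) ≤ ∑ i ∈ G, D ((i : ℝ) / n) := by
    have : ∀ i ∈ G, D x / M ^ r ≤ D ((i : ℝ) / n) := by
      intro i hi
      rw [div_le_iff₀ hMr]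
      linarith [stepA i hi, mul_comm (D ((i:ℝ)/n)) (M ^ r)]
    calc (G.card : ℝ) * (D x / M ^ r) = ∑ _i ∈ G, D x / M ^ r := by
          rw [Finset.sum_const, nsmul_eq_mul]
      _ ≤ _ := Finset.sum_le_sum this
  have hsum3 : (n : ℝ) / M * (D x / M ^ r) ≤ S := by
    have hDxnn : 0 ≤ D x / M ^ r := div_nonneg (hDnn x) (le_of_lt hMr)
    calc (n : ℝ) / M * (D x / M ^ r) ≤ (G.card : ℝ) * (D x / M ^ r) :=
          mul_le_mul_of_nonneg_right hGlarge hDxnn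
      _ ≤ ∑ i ∈ G, D ((i : ℝ) / n) := hsum2
      _ ≤ S := hsum1
  -- conclude
  rw [div_le_div_iff₀ hpos hnpos]
  have hrw : M ^ (r + 1) = M ^ r * M := Real.rpow_add_one (ne_of_gt hM0) r
  rw [hrw]
  have hmul := mul_le_mul_of_nonneg_right hsum3 (le_of_lt (mul_pos hMr hM0))
  have hMne : M ≠ 0 := ne_of_gt hM0
  have hMrne : M ^ r ≠ 0 := ne_of_gt hMr
  have hLHS : (n : ℝ) / M * (D x / M ^ r) * (M ^ r * M) = D x * n := by
    calc (n : ℝ) / M * (D x / M ^ r) * (M ^ r * M)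
        = D x * n * (M ^ r / M ^ r) * (M / M) := by ring
      _ = D x * n := by rw [div_self hMrne, div_self hMne, mul_one, mul_one]
  rw [hLHS] at hmul
  calc D x * n ≤ S * (M ^ r * M) := hmul
    _ = M ^ r * M * S := by ring
end

section
/- Let ℓ : [0,1] → ℝ^d be a segment, C a finite set of k points in ℝ^d with weights w, lip an r-log-Lipschitz function, and D(x) := min_{c∈C} lip(w(c)·‖c − ℓ(x)‖₂). If D is Riemann integrable on [0,1], then for every x' ∈ [0,1], D(x') ≤ (20k)^{r+1} · ∫₀¹ D(x) dx. -/
/-!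
Put `K = 20k` and `ℓ x = u + x • v`. Since `lip` is monotone and `r`-log-Lipschitz,
`D x < D x' / K ^ r` forces some centre `c` to be `K` times closer to `ℓ x` than to `ℓ x'`.
For a fixed `c` these `x` form a set of diameter at most `2 / (K - 1) ≤ 1 / (9k)`, so `D ≥ D x' / K ^ r` on a subset of
`[0, 1]` of measure at least `8/9`, and Markov's inequality gives
`D x' ≤ (9/8) K ^ r ∫ D ≤ K ^ (r + 1) ∫ D`.
-/

open MeasureTheory Set

section Segment

variable {E : Type*} [SeminormedAddCommGroup E] [NormedSpace ℝ E]

lemma norm_add_smul_sub_add_smul (u v : E) (x y : ℝ) :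
    ‖(u + x • v) - (u + y • v)‖ = |x - y| * ‖v‖ := by
  rw [add_sub_add_left_eq_sub, ← sub_smul, norm_smul, Real.norm_eq_abs]

lemma abs_sub_mul_norm_le_norm_add_norm (c u v : E) (x y : ℝ) :
    |x - y| * ‖v‖ ≤ ‖c - (u + x • v)‖ + ‖c - (u + y • v)‖ := by
  calc |x - y| * ‖v‖ = ‖(c - (u + y • v)) - (c - (u + x • v))‖ := by
        rw [sub_sub_sub_cancel_left, norm_add_smul_sub_add_smul]
    _ ≤ ‖c - (u + x • v)‖ + ‖c - (u + y • v)‖ := (norm_sub_le _ _).trans_eq (add_comm _ _)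

lemma norm_sub_add_smul_le_add (c u v : E) (x y : ℝ) :
    ‖c - (u + y • v)‖ ≤ ‖c - (u + x • v)‖ + |x - y| * ‖v‖ := by
  rw [← norm_add_smul_sub_add_smul u v]
  exact norm_sub_le_norm_sub_add_norm_sub _ _ _

/-- Two points of the set lie within `2R/K` of `c`, where `R := ‖c - (u + x' • v)‖`, while
`R ≤ R/K + (b - a) ‖v‖`; so the set has diameter at most `2 (b - a) / (K - 1)`. -/
theorem volume_real_setOf_mul_norm_lt_le (c u v : E) {a b K x' : ℝ} (hK : 1 < K)
    (hx' : x' ∈ Icc a b) :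
    volume.real {x ∈ Icc a b | K * ‖c - (u + x • v)‖ < ‖c - (u + x' • v)‖} ≤
      2 * (b - a) / (K - 1) := by
  have hab : 0 ≤ b - a := by linarith [hx'.1, hx'.2]
  have hbound : 0 ≤ 2 * (b - a) / (K - 1) := div_nonneg (by linarith) (by linarith)
  refine ENNReal.toReal_le_of_le_ofReal hbound ((Real.volume_le_diam _).trans ?_)
  refine Metric.ediam_le fun x ⟨hx, hxK⟩ y ⟨_, hyK⟩ => (edist_le_ofReal hbound).2 ?_
  set R := ‖c - (u + x' • v)‖
  have hxx' : |x - x'| ≤ b - a :=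
    abs_sub_le_iff.2 ⟨by linarith [hx.2, hx'.1], by linarith [hx.1, hx'.2]⟩
  have hRx : R ≤ ‖c - (u + x • v)‖ + (b - a) * ‖v‖ :=
    (norm_sub_add_smul_le_add c u v x x').trans (by gcongr)
  have hxy : K * (|x - y| * ‖v‖) < 2 * R := by
    nlinarith [abs_sub_mul_norm_le_norm_add_norm c u v x y]
  have hR : (K - 1) * R < K * ((b - a) * ‖v‖) := by
    nlinarith [mul_le_mul_of_nonneg_left hRx (by linarith : 0 ≤ K)]
  have hneg : K * ‖v‖ * ((K - 1) * |x - y| - 2 * (b - a)) < 0 := by nlinarith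
  rw [Real.dist_eq, le_div_iff₀ (by linarith), mul_comm]
  linarith [neg_of_mul_neg_right hneg (by positivity)]

end Segment

theorem mul_sub_le_intervalIntegral_of_measureReal_lt_le {f : ℝ → ℝ} {a b t ε : ℝ} (hab : a ≤ b)
    (hf0 : ∀ x, 0 ≤ f x) (hf : IntervalIntegrable f volume a b) (ht : 0 ≤ t)
    (hε : volume.real ({x | f x < t} ∩ Ioc a b) ≤ ε) :
    t * (b - a - ε) ≤ ∫ x in a..b, f x := by
  set μ := volume.restrict (Ioc a b)
  have hlarge : b - a - ε ≤ μ.real {x | t ≤ f x} := by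
    have hunion : {x | t ≤ f x} ∪ {x | f x < t} = univ := by ext x; simp [le_or_gt]
    have hsmall : μ.real {x | f x < t} ≤ ε := by
      rwa [measureReal_restrict_apply' measurableSet_Ioc]
    have := measureReal_union_le (μ := μ) {x | t ≤ f x} {x | f x < t}
    rw [hunion, measureReal_restrict_apply_univ, Real.volume_real_Ioc_of_le hab] at this
    linarith
  calc t * (b - a - ε) ≤ t * μ.real {x | t ≤ f x} := by gcongr
    _ ≤ ∫ x, f x ∂μ := mul_meas_ge_le_integral_of_nonneg (ae_of_all _ hf0) hf.1 t
    _ = ∫ x in a..b, f x := (intervalIntegral.integral_of_le hab).symm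

section LogLipschitz

variable {lip : ℝ → ℝ} {r : ℝ}

theorem inf'_le_rpow_mul_inf' (hmono : ∀ x y, 0 ≤ x → x ≤ y → lip x ≤ lip y)
    (hlip : ∀ c x, 1 ≤ c → 0 ≤ x → lip (c * x) ≤ c ^ r * lip x) {ι : Type*} {s : Finset ι}
    (hs : s.Nonempty) {f g : ι → ℝ} {K : ℝ} (hK : 1 ≤ K) (hf : ∀ i ∈ s, 0 ≤ f i)
    (hg : ∀ i ∈ s, 0 ≤ g i) (hfg : ∀ i ∈ s, f i ≤ K * g i) :
    s.inf' hs (fun i => lip (f i)) ≤ K ^ r * s.inf' hs (fun i => lip (g i)) := by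
  obtain ⟨i, hi, hmin⟩ := s.exists_mem_eq_inf' hs (fun i => lip (g i))
  rw [hmin]
  exact (s.inf'_le _ hi).trans ((hmono _ _ (hf i hi) (hfg i hi)).trans (hlip K _ hK (hg i hi)))

theorem exists_mul_norm_lt_of_rpow_mul_inf'_lt (hmono : ∀ x y, 0 ≤ x → x ≤ y → lip x ≤ lip y)
    (hlip : ∀ c x, 1 ≤ c → 0 ≤ x → lip (c * x) ≤ c ^ r * lip x) {E : Type*}
    [SeminormedAddCommGroup E] {s : Finset E} (hs : s.Nonempty) {w : E → ℝ}
    (hw : ∀ c ∈ s, 0 ≤ w c) {K : ℝ} (hK : 1 ≤ K) {p q : E}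
    (h : K ^ r * s.inf' hs (fun c => lip (w c * ‖c - p‖)) <
      s.inf' hs (fun c => lip (w c * ‖c - q‖))) :
    ∃ c ∈ s, K * ‖c - p‖ < ‖c - q‖ := by
  by_contra! hfar
  refine h.not_ge (inf'_le_rpow_mul_inf' hmono hlip hs hK
    (fun c hc => mul_nonneg (hw c hc) (norm_nonneg _))
    (fun c hc => mul_nonneg (hw c hc) (norm_nonneg _)) fun c hc => ?_)
  nlinarith [hw c hc, hfar c hc]

end LogLipschitz

theorem segment_integral_sensitivity_bound_general (d k : ℕ) (r : ℝ)
    (u v : EuclideanSpace ℝ (Fin d))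
    (C : Finset (EuclideanSpace ℝ (Fin d))) (hC : C.Nonempty) (hCcard : C.card = k)
    (w : EuclideanSpace ℝ (Fin d) → ℝ) (hw : ∀ c ∈ C, 0 ≤ w c)
    (lip : ℝ → ℝ)
    (hmono : ∀ x y, 0 ≤ x → x ≤ y → lip x ≤ lip y)
    (hnonneg : ∀ x, 0 ≤ x → 0 ≤ lip x)
    (hlip : ∀ c x, 1 ≤ c → 0 ≤ x → lip (c * x) ≤ c ^ r * lip x)
    (D : ℝ → ℝ)
    (hD : ∀ x : ℝ, D x = C.inf' hC (fun c => lip (w c * ‖c - (u + x • v)‖)))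
    (hint : IntervalIntegrable D MeasureTheory.volume 0 1)
    (x' : ℝ) (hx' : x' ∈ Set.Icc (0:ℝ) 1) :
    D x' ≤ (20 * k : ℝ) ^ (r + 1) * ∫ x in (0:ℝ)..1, D x := by
  have hk : (1 : ℝ) ≤ k := by exact_mod_cast hCcard ▸ hC.card_pos
  set K : ℝ := 20 * k
  have hK : 1 < K := by linarith
  have hKr : 0 < K ^ r := Real.rpow_pos_of_pos (by linarith) r
  have hD0 (x : ℝ) : 0 ≤ D x :=
    (hD x).symm ▸ C.le_inf' hC _ fun c hc => hnonneg _ (mul_nonneg (hw c hc) (norm_nonneg _))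
  set near : EuclideanSpace ℝ (Fin d) → Set ℝ :=
    fun c => {x ∈ Icc 0 1 | K * ‖c - (u + x • v)‖ < ‖c - (u + x' • v)‖}
  have hsublevel : {x | D x < D x' / K ^ r} ∩ Ioc 0 1 ⊆ ⋃ c ∈ C, near c := by
    rintro x ⟨hDx, hx⟩
    rw [mem_ofPred_eq, lt_div_iff₀' hKr, hD, hD] at hDx
    obtain ⟨c, hc, hcloser⟩ := exists_mul_norm_lt_of_rpow_mul_inf'_lt hmono hlip hC hw hK.le hDx
    exact mem_biUnion hc ⟨Ioc_subset_Icc_self hx, hcloser⟩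
  have hnear_finite : volume (⋃ c ∈ C, near c) ≠ ⊤ :=
    ((measure_mono (iUnion₂_subset fun c _ => sep_subset _ _)).trans_lt measure_Icc_lt_top).ne
  have hsmall : volume.real ({x | D x < D x' / K ^ r} ∩ Ioc 0 1) ≤ 1 / 9 :=
    calc _ ≤ volume.real (⋃ c ∈ C, near c) := measureReal_mono hsublevel hnear_finite
      _ ≤ ∑ c ∈ C, volume.real (near c) := measureReal_biUnion_finset_le _ _
      _ ≤ ∑ c ∈ C, 2 * (1 - 0) / (K - 1) :=
        Finset.sum_le_sum fun c _ => volume_real_setOf_mul_norm_lt_le c u v hK hx'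
      _ = k * (2 / (20 * k - 1)) := by simp [hCcard, K]
      _ ≤ 1 / 9 := by rw [mul_div_assoc', div_le_div_iff₀ (by linarith) (by norm_num)]; linarith
  have hmarkov := mul_sub_le_intervalIntegral_of_measureReal_lt_le zero_le_one hD0 hint
    (div_nonneg (hD0 x') hKr.le) hsmall
  calc D x' = K ^ r * (D x' / K ^ r) := (mul_div_cancel₀ _ hKr.ne').symm
    _ ≤ K ^ r * (K * ∫ x in (0:ℝ)..1, D x) := by gcongr; nlinarith [div_nonneg (hD0 x') hKr.le]
    _ = K ^ (r + 1) * ∫ x in (0:ℝ)..1, D x := by rw [Real.rpow_add_one (by linarith)]; ring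

theorem segment_integral_sensitivity_bound (d k : ℕ) (hk : 1 ≤ k) (r : ℝ) (hr : 0 ≤ r)
    (u v : EuclideanSpace ℝ (Fin d))
    (C : Finset (EuclideanSpace ℝ (Fin d))) (hC : C.Nonempty) (hCcard : C.card = k)
    (w : EuclideanSpace ℝ (Fin d) → ℝ) (hw : ∀ c ∈ C, 0 ≤ w c)
    (lip : ℝ → ℝ)
    (hmono : ∀ x y, 0 ≤ x → x ≤ y → lip x ≤ lip y)
    (hnonneg : ∀ x, 0 ≤ x → 0 ≤ lip x)
    (hlip : ∀ c x, 1 ≤ c → 0 ≤ x → lip (c * x) ≤ c ^ r * lip x)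
    (D : ℝ → ℝ)
    (hD : ∀ x : ℝ, D x = C.inf' hC (fun c => lip (w c * ‖c - (u + x • v)‖)))
    (hint : IntervalIntegrable D MeasureTheory.volume 0 1)
    (x' : ℝ) (hx' : x' ∈ Set.Icc (0:ℝ) 1) :
    D x' ≤ (20 * k : ℝ) ^ (r + 1) * ∫ x in (0:ℝ)..1, D x :=
  segment_integral_sensitivity_bound_general d k r u v C hC hCcard w hw lip hmono hnonneg hlip D hD
    hint x' hx'
end
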